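/- arXiv:1809.05496 — 5 statements merged into one kernel-verified Lean document; each statement's English description precedes it below -/
import Mathlib

section
/- Renormalization of translated cone exchanges (Theorem A). Let k ≥ 1 be an integer, λ = 1/(k+Φ) and η = 1 − kλ. Then for every admissible α and every permutation τ of {1,…,d}, the first return map R of F to the middle cone P_c is renormalizable near the origin: there exists y* > 0 such that for every z ∈ P_c with Im z < y*, the return times k(z) and k(Φ²z) are finite and R(Φ²z) = Φ²·R(z) (note Φ²z ∈ P_c since P_c is a cone). -/
/-!
Write `w = E z` and let `ξ n = n * Φ - round (n * Φ)`. Near the real axis the horizontal line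
through `w` crosses `P_c` in a short segment `w - λ * [lo, hi]` with `lo ≤ 0 ≤ hi`, and off
`P_c` the map `F` moves points along this line: by `-1 = -λ * (k + Φ)` in `P_0`, by `+λ` in
`P_{d+1}`. Since `F z = w - λ * Φ`, in the coordinate `x` of `w - λ * x` the orbit runs through
the fractional parts of `n * Φ` and the same values minus one, so it returns to `P_c` at
`x = ξ N`, where `N` is the first `n ≥ 1` with `ξ n ∈ [lo, hi]`.

Replacing `z` by `Φ² * z` multiplies `w`, `lo` and `hi` by `Φ²`. Multiplication by `Φ²` on
`ℤ[Φ]` sends `n * Φ - m` to `(2 * n + m) * Φ - (n + m)`, so `n ↦ 2 * n + round (n * Φ)` is a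
monotone bijection from the visit times of `ξ` to `[lo, hi]` onto those to `Φ² * [lo, hi]`,
multiplying `ξ` by `Φ²`. Hence the first visits correspond and `R (Φ² * z) = Φ² * R z`.
-/

open Complex Real Set
open scoped Classical

noncomputable section

/-- The reciprocal golden ratio Φ = (√5 − 1)/2. -/
def Phi : ℝ := (Real.sqrt 5 - 1) / 2

/-- β = (π − |α|)/2. -/
def beta {d : ℕ} (α : Fin d → ℝ) : ℝ := (π - ∑ k, α k) / 2

/-- σ_j = β + α_1 + … + α_j (partial sums of the angles, shifted by β). -/
def sig {d : ℕ} (α : Fin d → ℝ) (j : ℕ) : ℝ :=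
  beta α + ∑ k ∈ Finset.univ.filter (fun k : Fin d => (k : ℕ) < j), α k

/-- θ_j = Σ_{τ(k)<τ(j)} α_k − Σ_{k<j} α_k. -/
def theta {d : ℕ} (α : Fin d → ℝ) (τ : Equiv.Perm (Fin d)) (j : Fin d) : ℝ :=
  (∑ k ∈ Finset.univ.filter (fun k : Fin d => τ k < τ j), α k)
  - ∑ k ∈ Finset.univ.filter (fun k : Fin d => k < j), α k

/-- The cone P_0 = {z ∈ ℍ : arg z ∈ [0, β)}. -/
def P0 {d : ℕ} (α : Fin d → ℝ) : Set ℂ :=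
  {z : ℂ | 0 ≤ z.im ∧ 0 ≤ z.arg ∧ z.arg < beta α}

/-- The middle cones P_1, …, P_d (0-indexed by `j : Fin d`):
P_1 corresponds to arg ∈ [β, β+α_1], and P_j (j ≥ 2) to arg ∈ (σ_{j−1}, σ_j]. -/
def Pmid {d : ℕ} (α : Fin d → ℝ) (j : Fin d) : Set ℂ :=
  {z : ℂ | 0 ≤ z.im ∧
    (if (j : ℕ) = 0 then sig α 0 ≤ z.arg else sig α (j : ℕ) < z.arg) ∧
    z.arg ≤ sig α ((j : ℕ) + 1)}

/-- The cone P_{d+1} = {z ∈ ℍ : arg z ∈ (π−β, π]}. -/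
def Pend {d : ℕ} (α : Fin d → ℝ) : Set ℂ :=
  {z : ℂ | 0 ≤ z.im ∧ π - beta α < z.arg ∧ z.arg ≤ π}

/-- The middle cone P_c = P_1 ∪ … ∪ P_d. -/
def Pc {d : ℕ} (α : Fin d → ℝ) : Set ℂ := ⋃ j, Pmid α j

/-- The exchange map E. -/
def Emap {d : ℕ} (α : Fin d → ℝ) (τ : Equiv.Perm (Fin d)) (z : ℂ) : ℂ :=
  if h : ∃ j, z ∈ Pmid α j then
    z * Complex.exp ((theta α τ h.choose : ℝ) * Complex.I)
  else z

/-- The translation map G. -/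
def Gmap {d : ℕ} (α : Fin d → ℝ) (lam eta : ℝ) (z : ℂ) : ℂ :=
  if z ∈ P0 α then z - 1
  else if z ∈ Pend α then z + (lam : ℂ)
  else if z ∈ Pc α then z - (eta : ℂ)
  else z

/-- The translated cone exchange F = G ∘ E. -/
def Fmap {d : ℕ} (α : Fin d → ℝ) (τ : Equiv.Perm (Fin d)) (lam eta : ℝ) (z : ℂ) : ℂ :=
  Gmap α lam eta (Emap α τ z)

/-- The set of positive times at which the orbit of z visits P_c. -/
def hitSet {d : ℕ} (α : Fin d → ℝ) (τ : Equiv.Perm (Fin d)) (lam eta : ℝ) (z : ℂ) : Set ℕ :=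
  {n : ℕ | 0 < n ∧ (Fmap α τ lam eta)^[n] z ∈ Pc α}

/-- The first hitting time k(z) of z to P_c (0 if the orbit never returns). -/
def hitTime {d : ℕ} (α : Fin d → ℝ) (τ : Equiv.Perm (Fin d)) (lam eta : ℝ) (z : ℂ) : ℕ :=
  sInf (hitSet α τ lam eta z)

/-- The first return map R(z) = F^{k(z)}(z). -/
def Rmap {d : ℕ} (α : Fin d → ℝ) (τ : Equiv.Perm (Fin d)) (lam eta : ℝ) (z : ℂ) : ℂ :=
  (Fmap α τ lam eta)^[hitTime α τ lam eta z] z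

lemma Phi_eq_neg_goldenConj : Phi = -goldenConj := by
  rw [Phi, goldenConj]; ring

lemma Phi_pos : 0 < Phi := by
  rw [Phi_eq_neg_goldenConj]; linarith [goldenConj_neg]

lemma Phi_sq : Phi ^ 2 = 1 - Phi := by
  rw [Phi_eq_neg_goldenConj, neg_sq, goldenConj_sq]; ring

lemma Phi_sq_pos : 0 < Phi ^ 2 := pow_pos Phi_pos 2

lemma Phi_sq_lt_one_half : Phi ^ 2 < 1 / 2 := by
  nlinarith [Phi_sq, Phi_pos]

lemma round_eq_of_abs_sub_lt {x : ℝ} {m : ℤ} (h : |x - m| < 1 / 2) : round x = m := by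
  rw [round_eq_iff]
  constructor <;> linarith [abs_lt.mp h]

lemma round_mono : Monotone (round : ℝ → ℤ) := fun x y h => by
  rw [round_eq, round_eq]; exact Int.floor_mono (by linarith)

def phiErr (n : ℕ) : ℝ := n * Phi - round (n * Phi)

lemma phiErr_eq {n : ℕ} {m : ℤ} (h : |n * Phi - m| < 1 / 2) : phiErr n = n * Phi - m := by
  rw [phiErr, round_eq_of_abs_sub_lt h]

lemma phiErr_eq_of_mem_Icc {lo hi : ℝ} (hlo : -(1 / 2) < lo) (hhi : hi < 1 / 2) {n : ℕ}
    {m : ℤ} (h : n * Phi - m ∈ Icc lo hi) : phiErr n = n * Phi - m :=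
  phiErr_eq (abs_lt.mpr ⟨by linarith [h.1], by linarith [h.2]⟩)

lemma abs_phiErr_le (n : ℕ) : |phiErr n| ≤ 1 / 2 := abs_sub_round _

lemma phiErr_zero : phiErr 0 = 0 := by simp [phiErr]

lemma phiErr_one : phiErr 1 = -Phi ^ 2 := by
  have h := phiErr_eq (n := 1) (m := 1)
  push_cast at h
  rw [h (by rw [abs_lt]; constructor <;> nlinarith [Phi_sq, Phi_pos])]
  linarith [Phi_sq]

lemma phiErr_two : phiErr 2 = Phi ^ 3 := by
  have h := phiErr_eq (n := 2) (m := 1)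
  push_cast at h
  rw [h (by rw [abs_lt]; constructor <;> nlinarith [Phi_sq, Phi_pos])]
  linear_combination (1 - Phi) * Phi_sq

lemma round_natCast_mul_Phi_nonneg (n : ℕ) : 0 ≤ round (n * Phi) :=
  (round_natCast 0).symm.trans_le
    (round_mono (by simpa using mul_nonneg (Nat.cast_nonneg n) Phi_pos.le))

lemma round_natCast_mul_Phi_le (n : ℕ) : round (n * Phi) ≤ n :=
  (round_mono (by nlinarith [Phi_sq, Phi_pos, (Nat.cast_nonneg n : (0 : ℝ) ≤ n)])).trans
    (round_natCast n).le

/-- Multiplication by `Phi ^ 2` on `ℤ[Phi]`, read on the coefficient of `Phi`: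
`Phi ^ 2 * (n * Phi - m) = (2 * n + m) * Phi - (n + m)`. -/
def phiRenorm (n : ℕ) : ℕ := 2 * n + (round (n * Phi)).toNat

lemma natCast_phiRenorm (n : ℕ) : (phiRenorm n : ℝ) = 2 * n + round (n * Phi) := by
  rw [phiRenorm, Nat.cast_add, ← Int.cast_natCast (round _).toNat,
    Int.toNat_of_nonneg (round_natCast_mul_Phi_nonneg n)]
  push_cast; ring

lemma monotone_phiRenorm : Monotone phiRenorm := fun a b h =>
  add_le_add (by omega) (Int.toNat_le_toNat (round_mono (by gcongr; exact Phi_pos.le)))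

lemma le_phiRenorm (n : ℕ) : n ≤ phiRenorm n := by
  rw [phiRenorm]; omega

lemma phiErr_phiRenorm (n : ℕ) : phiErr (phiRenorm n) = Phi ^ 2 * phiErr n := by
  have key :
      (phiRenorm n : ℝ) * Phi - ((n + round (n * Phi) : ℤ) : ℝ) = Phi ^ 2 * phiErr n := by
    rw [natCast_phiRenorm, phiErr]; push_cast
    linear_combination ((round (n * Phi) : ℝ) - n * Phi + n) * Phi_sq
  have hsmall : |Phi ^ 2 * phiErr n| < 1 / 2 := by
    rw [abs_mul, abs_of_pos Phi_sq_pos]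
    nlinarith [abs_phiErr_le n, Phi_sq_lt_one_half, Phi_sq_pos]
  rw [phiErr_eq (m := n + round (n * Phi)) (key ▸ hsmall), key]

lemma exists_phiRenorm_eq {n : ℕ} (h : |phiErr n| < Phi ^ 2 / 2) : ∃ m, phiRenorm m = n := by
  set r := round (n * Phi)
  have hr : (r.toNat : ℝ) = r := by
    rw [← Int.cast_natCast, Int.toNat_of_nonneg (round_natCast_mul_Phi_nonneg n)]
  have hrn : r.toNat ≤ n := by have := round_natCast_mul_Phi_le n; omega
  refine ⟨n - r.toNat, ?_⟩
  have key :
      ((n - r.toNat : ℕ) : ℝ) * Phi - ((2 * r - n : ℤ) : ℝ) = (2 + Phi) * phiErr n := by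
    rw [Nat.cast_sub hrn, hr, phiErr]; push_cast
    linear_combination (-(n : ℝ)) * Phi_sq
  have hround : round (((n - r.toNat : ℕ) : ℝ) * Phi) = 2 * r - n := by
    refine round_eq_of_abs_sub_lt ?_
    rw [key, abs_mul, abs_of_pos (by linarith [Phi_pos])]
    nlinarith [Phi_sq, Phi_pos]
  have := round_natCast_mul_Phi_nonneg (n - r.toNat)
  rw [phiRenorm, hround]
  omega

def phiVisits (lo hi : ℝ) : Set ℕ := {n | 1 ≤ n ∧ phiErr n ∈ Icc lo hi}

lemma phiErr_phiRenorm_iterate (m n : ℕ) :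
    phiErr (phiRenorm^[m] n) = (Phi ^ 2) ^ m * phiErr n := by
  induction m with
  | zero => simp
  | succ m ih => rw [Function.iterate_succ_apply', phiErr_phiRenorm, ih]; ring

lemma exists_phiErr_eq_mul {n₀ : ℕ} (hn₀ : 1 ≤ n₀) {ε : ℝ} (hε : 0 < ε) :
    ∃ n, 1 ≤ n ∧ ∃ t, 0 < t ∧ t < ε ∧ phiErr n = t * phiErr n₀ := by
  obtain ⟨m, hm⟩ := exists_pow_lt_of_lt_one hε (by linarith [Phi_sq_lt_one_half] : Phi ^ 2 < 1)
  exact ⟨phiRenorm^[m] n₀, hn₀.trans (Function.id_le_iterate_of_id_le le_phiRenorm m n₀),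
    (Phi ^ 2) ^ m, pow_pos Phi_sq_pos m, hm, phiErr_phiRenorm_iterate m n₀⟩

lemma phiVisits_nonempty {lo hi : ℝ} (hlo : lo ≤ 0) (hhi : 0 ≤ hi) (hlohi : lo < hi) :
    (phiVisits lo hi).Nonempty := by
  rcases hlo.lt_or_eq with hlo | rfl
  · obtain ⟨n, hn, t, ht, htε, hξ⟩ := exists_phiErr_eq_mul le_rfl (neg_pos.mpr hlo)
    rw [phiErr_one] at hξ
    exact ⟨n, hn, by nlinarith [Phi_sq_lt_one_half, Phi_sq_pos], by nlinarith [Phi_sq_pos]⟩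
  · obtain ⟨n, hn, t, ht, htε, hξ⟩ := exists_phiErr_eq_mul (by norm_num : 1 ≤ 2) hlohi
    rw [phiErr_two] at hξ
    have hPhi3 : 0 < Phi ^ 3 := pow_pos Phi_pos 3
    have hPhi3_lt : Phi ^ 3 < 1 := by nlinarith [Phi_sq_lt_one_half, Phi_pos, Phi_sq_pos]
    exact ⟨n, hn, by nlinarith, by nlinarith⟩

lemma phiRenorm_mem_phiVisits_iff {lo hi : ℝ} {n : ℕ} :
    phiRenorm n ∈ phiVisits (Phi ^ 2 * lo) (Phi ^ 2 * hi) ↔ n ∈ phiVisits lo hi := by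
  have hpos : 1 ≤ phiRenorm n ↔ 1 ≤ n :=
    ⟨fun h => Nat.one_le_iff_ne_zero.mpr (by rintro rfl; simp [phiRenorm] at h),
      fun h => h.trans (le_phiRenorm n)⟩
  simp only [phiVisits, mem_ofPred_eq, mem_Icc, phiErr_phiRenorm, hpos,
    mul_le_mul_iff_right₀ Phi_sq_pos]

lemma phiVisits_mul_eq_image {lo hi : ℝ} (hlo : -(1 / 2) < lo) (hhi : hi < 1 / 2) :
    phiVisits (Phi ^ 2 * lo) (Phi ^ 2 * hi) = phiRenorm '' phiVisits lo hi := by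
  ext n
  refine ⟨fun hn => ?_, ?_⟩
  · obtain ⟨m, rfl⟩ : ∃ m, phiRenorm m = n := by
      refine exists_phiRenorm_eq (abs_lt.mpr ⟨?_, ?_⟩) <;>
        nlinarith [hn.2.1, hn.2.2, Phi_sq_pos]
    exact ⟨m, phiRenorm_mem_phiVisits_iff.mp hn, rfl⟩
  · rintro ⟨m, hm, rfl⟩
    exact phiRenorm_mem_phiVisits_iff.mpr hm

lemma phiErr_sInf_phiVisits_mul {lo hi : ℝ} (hlo : -(1 / 2) < lo) (hhi : hi < 1 / 2) :
    phiErr (sInf (phiVisits (Phi ^ 2 * lo) (Phi ^ 2 * hi)))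
      = Phi ^ 2 * phiErr (sInf (phiVisits lo hi)) := by
  rw [phiVisits_mul_eq_image hlo hhi]
  rcases (phiVisits lo hi).eq_empty_or_nonempty with h | h
  · simp [h, phiErr_zero]
  · rw [← monotone_phiRenorm.map_csInf h, phiErr_phiRenorm]

def OrbitAvoids {X : Type*} (f : X → X) (A : Set X) (x : X) (T : ℕ) : Prop :=
  ∀ i < T, f^[i] x ∉ A

section OrbitAvoids
variable {X : Type*} {f : X → X} {A : Set X} {x : X}

lemma orbitAvoids_one (hx : x ∉ A) : OrbitAvoids f A x 1 := fun i hi => by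
  rwa [Nat.lt_one_iff.mp hi]

lemma OrbitAvoids.append {T₁ T₂ : ℕ} (h₁ : OrbitAvoids f A x T₁)
    (h₂ : OrbitAvoids f A (f^[T₁] x) T₂) : OrbitAvoids f A x (T₁ + T₂) := fun i hi => by
  rcases lt_or_ge i T₁ with h | h
  · exact h₁ i h
  · obtain ⟨j, rfl⟩ := Nat.exists_eq_add_of_le h
    rw [add_comm, Function.iterate_add_apply]
    exact h₂ j (by omega)

end OrbitAvoids

/-- `F` off the middle cone, on a horizontal line `w - lam * x` and read in the coordinate `x`:
left of the window (in `P_0`) it moves by `-1 = -lam * (k + Phi)`, right of it (in `P_{d+1}`)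
by `+lam`. -/
def lineStep (k : ℕ) (lo x : ℝ) : ℝ := if x < lo then x + (k + Phi) else x - 1

section LineStep
variable {k : ℕ} {lo hi : ℝ}

lemma lineStep_of_lt {x : ℝ} (h : x < lo) : lineStep k lo x = x + (k + Phi) := if_pos h

lemma lineStep_of_le {x : ℝ} (h : lo ≤ x) : lineStep k lo x = x - 1 := if_neg h.not_gt

lemma lineStep_iterate_add_natCast {g : ℝ} (hg : 0 ≤ g) (hlo : lo ≤ 0) (M : ℕ) :
    (lineStep k lo)^[M] (g + M) = g := by
  induction M with
  | zero => simp
  | succ M ih =>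
    rw [Function.iterate_succ_apply, lineStep_of_le (by push_cast; linarith)]
    rwa [Nat.cast_succ, ← add_assoc, add_sub_cancel_right]

lemma orbitAvoids_add_natCast {g : ℝ} (hg : 0 ≤ g) (hlo : lo ≤ 0) (hhi : hi < 1) (M : ℕ) :
    OrbitAvoids (lineStep k lo) (Icc lo hi) (g + M) M := fun i hi' hmem => by
  have hsplit : g + M = (g + (M - i : ℕ)) + (i : ℕ) := by push_cast [hi'.le]; ring
  rw [hsplit, lineStep_iterate_add_natCast (by positivity) hlo] at hmem
  have : (1 : ℝ) ≤ (M - i : ℕ) := by exact_mod_cast (by omega : 1 ≤ M - i)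
  linarith [hmem.2]

/-- From `g`, one step right of the window leads to `g - 1`, one step left of it to
`fract (g + Phi) + M` with `M : ℕ`, and `M` more steps back down to `fract (g + Phi)`. -/
lemma exists_lineStep_iterate_eq_fract_add (hk : 1 ≤ k) (hlo : lo ≤ 0) (hhi0 : 0 ≤ hi)
    (hhi : hi < 1) {g : ℝ} (hg0 : 0 ≤ g) (hg1 : g < 1) (hgW : g ∉ Icc lo hi)
    (hgW' : g - 1 ∉ Icc lo hi) :
    ∃ T, (lineStep k lo)^[T] g = Int.fract (g + Phi) ∧
      OrbitAvoids (lineStep k lo) (Icc lo hi) g T := by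
  have hstep₁ : lineStep k lo g = g - 1 := lineStep_of_le (by linarith)
  have hlt : g - 1 < lo := by
    by_contra! h; exact hgW' ⟨h, by linarith⟩
  set M := ⌊g + Phi⌋₊ + (k - 1)
  have hstep₂ : lineStep k lo (g - 1) = Int.fract (g + Phi) + M := by
    have hfloor : (⌊g + Phi⌋₊ : ℝ) + Int.fract (g + Phi) = g + Phi := by
      rw [natCast_floor_eq_intCast_floor (by linarith [Phi_pos]), Int.floor_add_fract]
    rw [lineStep_of_lt hlt]
    push_cast [M, Nat.cast_sub hk]
    linarith
  refine ⟨M + 2, ?_, ?_⟩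
  · rw [Function.iterate_add_apply, Function.iterate_succ_apply, Function.iterate_one, hstep₁,
      hstep₂, lineStep_iterate_add_natCast (Int.fract_nonneg _) hlo]
  · rw [add_comm]
    refine ((orbitAvoids_one hgW).append (orbitAvoids_one ?_)).append ?_
    · rwa [Function.iterate_one, hstep₁]
    · rw [Function.iterate_succ_apply, Function.iterate_one, hstep₁, hstep₂]
      exact orbitAvoids_add_natCast (Int.fract_nonneg _) hlo hhi M

lemma exists_lineStep_iterate_eq_fract (hk : 1 ≤ k) (hlo0 : lo ≤ 0) (hhi0 : 0 ≤ hi)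
    (hlo : -(1 / 2) < lo) (hhi : hi < 1 / 2) {n : ℕ} (hn : 1 ≤ n)
    (hbefore : ∀ m, 1 ≤ m → m < n → phiErr m ∉ Icc lo hi) :
    ∃ T, (lineStep k lo)^[T] Phi = Int.fract (n * Phi) ∧
      OrbitAvoids (lineStep k lo) (Icc lo hi) Phi T := by
  induction n, hn using Nat.le_induction with
  | base =>
    refine ⟨0, ?_, fun i hi => absurd hi (Nat.not_lt_zero i)⟩
    rw [Nat.cast_one, one_mul,
      Int.fract_eq_self.mpr ⟨Phi_pos.le, by linarith [Phi_sq_pos, Phi_sq]⟩]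
    rfl
  | succ n hn ih =>
    obtain ⟨T, hT, havoid⟩ := ih fun m h1 h2 => hbefore m h1 (by omega)
    set g := Int.fract (n * Phi)
    have hg : (n : ℝ) * Phi = ⌊(n : ℝ) * Phi⌋ + g := (Int.floor_add_fract _).symm
    have hgW : g ∉ Icc lo hi := fun hW => hbefore n hn (by omega) <| by
      rwa [phiErr_eq_of_mem_Icc hlo hhi (m := ⌊(n : ℝ) * Phi⌋)
        (by rwa [Int.self_sub_floor])]
    have hgW' : g - 1 ∉ Icc lo hi := fun hW => hbefore n hn (by omega) <| by
      have h : (n : ℝ) * Phi - ((⌊(n : ℝ) * Phi⌋ + 1 : ℤ) : ℝ) = g - 1 := by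
        push_cast; linarith
      rwa [phiErr_eq_of_mem_Icc hlo hhi (h ▸ hW), h]
    obtain ⟨T', hT', havoid'⟩ := exists_lineStep_iterate_eq_fract_add hk hlo0 hhi0 (by linarith)
      (Int.fract_nonneg _) (Int.fract_lt_one _) hgW hgW'
    refine ⟨T + T', ?_, havoid.append (by rw [hT]; exact havoid')⟩
    rw [add_comm, Function.iterate_add_apply, hT, hT', Int.fract_eq_fract]
    exact ⟨-⌊(n : ℝ) * Phi⌋, by push_cast; linarith⟩

lemma exists_lineStep_iterate_eq_phiErr (hk : 1 ≤ k) (hlo0 : lo ≤ 0) (hhi0 : 0 ≤ hi)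
    (hlo : -(1 / 2) < lo) (hhi : hi < 1 / 2) (hne : (phiVisits lo hi).Nonempty) :
    ∃ T, (lineStep k lo)^[T] Phi = phiErr (sInf (phiVisits lo hi)) ∧
      OrbitAvoids (lineStep k lo) (Icc lo hi) Phi T := by
  set N := sInf (phiVisits lo hi)
  obtain ⟨hN, hNW⟩ : N ∈ phiVisits lo hi := Nat.sInf_mem hne
  obtain ⟨T, hT, havoid⟩ := exists_lineStep_iterate_eq_fract hk hlo0 hhi0 hlo hhi hN
    fun m h1 h2 hW => Nat.notMem_of_lt_sInf h2 ⟨h1, hW⟩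
  have hround : (N : ℝ) * Phi - phiErr N = round ((N : ℝ) * Phi) := by rw [phiErr]; ring
  rcases le_or_gt 0 (phiErr N) with hξ | hξ
  · refine ⟨T, ?_, havoid⟩
    rw [hT, Int.fract_eq_iff]
    exact ⟨hξ, by linarith [hNW.2], _, hround⟩
  · have hfract : Int.fract ((N : ℝ) * Phi) = phiErr N + 1 := by
      rw [Int.fract_eq_iff]
      exact ⟨by linarith [hNW.1], by linarith, round ((N : ℝ) * Phi) - 1,
        by push_cast; linarith⟩
    have hgW : phiErr N + 1 ∉ Icc lo hi := fun h => by linarith [h.2, hNW.1]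
    refine ⟨T + 1, ?_, havoid.append ?_⟩
    · rw [Function.iterate_succ_apply', hT, hfract, lineStep_of_le (by linarith [hNW.1]),
        add_sub_cancel_right]
    · rw [hT, hfract]
      exact orbitAvoids_one hgW

end LineStep

lemma re_mul_sin_sub_im_mul_cos (v : ℂ) (γ : ℝ) :
    v.re * Real.sin γ - v.im * Real.cos γ = ‖v‖ * Real.sin (γ - v.arg) := by
  rw [← norm_mul_cos_arg, ← norm_mul_sin_arg, Real.sin_sub]; ring

lemma arg_mem_Ioo_of_im_pos {v : ℂ} (hv : 0 < v.im) : v.arg ∈ Ioo 0 π :=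
  ⟨(arg_nonneg_iff.mpr hv.le).lt_of_ne fun h => hv.ne' (arg_eq_zero_iff.mp h.symm).2,
    arg_lt_pi_iff.mpr (Or.inr hv.ne')⟩

lemma arg_lt_iff_of_im_pos {v : ℂ} (hv : 0 < v.im) {γ : ℝ} (hγ : γ ∈ Ioo 0 π) :
    v.arg < γ ↔ v.im * Real.cos γ < v.re * Real.sin γ := by
  obtain ⟨h0, hπ⟩ := arg_mem_Ioo_of_im_pos hv
  have hnorm : 0 < ‖v‖ := norm_pos_iff.mpr fun h => by simp [h] at hv
  rw [← sub_pos (b := v.im * Real.cos γ), re_mul_sin_sub_im_mul_cos,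
    mul_pos_iff_of_pos_left hnorm]
  constructor
  · intro h; exact Real.sin_pos_of_pos_of_lt_pi (by linarith) (by linarith [hγ.2])
  · intro h
    by_contra! h'
    linarith [Real.sin_nonpos_of_nonpos_of_neg_pi_le (by linarith : γ - v.arg ≤ 0)
      (by linarith [hγ.1])]

lemma arg_le_iff_of_im_pos {v : ℂ} (hv : 0 < v.im) {γ : ℝ} (hγ : γ ∈ Ioo 0 π) :
    v.arg ≤ γ ↔ v.im * Real.cos γ ≤ v.re * Real.sin γ := by
  obtain ⟨h0, hπ⟩ := arg_mem_Ioo_of_im_pos hv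
  have hnorm : 0 < ‖v‖ := norm_pos_iff.mpr fun h => by simp [h] at hv
  rw [← sub_nonneg (b := v.im * Real.cos γ), re_mul_sin_sub_im_mul_cos,
    mul_nonneg_iff_of_pos_left hnorm]
  constructor
  · intro h; exact Real.sin_nonneg_of_nonneg_of_le_pi (by linarith) (by linarith [hγ.2])
  · intro h
    by_contra! h'
    linarith [Real.sin_neg_of_neg_of_neg_pi_lt (by linarith : γ - v.arg < 0)
      (by linarith [hγ.1])]

section Cones
variable {d : ℕ} {α : Fin d → ℝ}

lemma beta_pos (hsum : ∑ k, α k < π) : 0 < beta α := by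
  rw [beta]; linarith

lemma beta_le_pi_div_two (hpos : ∀ j, 0 < α j) : beta α ≤ π / 2 := by
  rw [beta]; linarith [Finset.sum_nonneg fun j (_ : j ∈ Finset.univ) => (hpos j).le]

lemma beta_lt_pi_div_two (hpos : ∀ j, 0 < α j) (j : Fin d) : beta α < π / 2 := by
  rw [beta]
  linarith [Finset.sum_pos (fun j (_ : j ∈ Finset.univ) => hpos j) ⟨j, Finset.mem_univ j⟩]

lemma beta_mem_Ioo (hpos : ∀ j, 0 < α j) (hsum : ∑ k, α k < π) : beta α ∈ Ioo 0 π :=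
  ⟨beta_pos hsum, by linarith [beta_le_pi_div_two hpos, Real.pi_pos]⟩

lemma pi_sub_beta_mem_Ioo (hpos : ∀ j, 0 < α j) (hsum : ∑ k, α k < π) :
    π - beta α ∈ Ioo 0 π :=
  ⟨by linarith [beta_le_pi_div_two hpos, Real.pi_pos], by linarith [beta_pos hsum]⟩

lemma sin_beta_pos (hpos : ∀ j, 0 < α j) (hsum : ∑ k, α k < π) : 0 < Real.sin (beta α) :=
  Real.sin_pos_of_mem_Ioo (beta_mem_Ioo hpos hsum)

lemma sig_zero : sig α 0 = beta α := by simp [sig]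

lemma sig_card : sig α d = π - beta α := by
  rw [sig, Finset.filter_true_of_mem fun k _ => k.is_lt, beta]; ring

lemma sig_succ (j : Fin d) : sig α (j + 1) = sig α j + α j := by
  have : Finset.univ.filter (fun k : Fin d => (k : ℕ) < j + 1)
      = insert j (Finset.univ.filter (fun k : Fin d => (k : ℕ) < j)) := by
    ext k
    simp only [Finset.mem_filter, Finset.mem_insert, Finset.mem_univ, true_and, Fin.ext_iff]
    omega
  rw [sig, sig, this, Finset.sum_insert (by simp)]; ring

lemma sig_mono (hpos : ∀ j, 0 < α j) : Monotone (sig α) := fun i j h => by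
  unfold sig
  exact add_le_add le_rfl (Finset.sum_le_sum_of_subset_of_nonneg
    (fun k hk => by simp only [Finset.mem_filter] at hk ⊢; exact ⟨hk.1, by omega⟩)
    fun k _ _ => (hpos k).le)

lemma sig_le_arg_of_mem_Pmid {v : ℂ} {j : Fin d} (h : v ∈ Pmid α j) : sig α j ≤ v.arg := by
  have h := h.2.1
  split_ifs at h with hj
  · rwa [hj]
  · exact h.le

lemma beta_le_arg_of_mem_Pmid (hpos : ∀ j, 0 < α j) {v : ℂ} {j : Fin d} (h : v ∈ Pmid α j) :
    beta α ≤ v.arg :=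
  calc beta α = sig α 0 := sig_zero.symm
    _ ≤ sig α j := sig_mono hpos (Nat.zero_le _)
    _ ≤ v.arg := sig_le_arg_of_mem_Pmid h

lemma Pmid_unique (hpos : ∀ j, 0 < α j) {v : ℂ} {i j : Fin d} (hi : v ∈ Pmid α i)
    (hj : v ∈ Pmid α j) : i = j := by
  have key : ∀ {a b : Fin d}, v ∈ Pmid α a → v ∈ Pmid α b → ¬ a < b :=
    fun {a b} ha hb hab => by
      have hb' := hb.2.1
      rw [if_neg (by omega)] at hb'
      linarith [ha.2.2, sig_mono hpos (show (a : ℕ) + 1 ≤ b from hab)]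
  exact le_antisymm (not_lt.mp (key hj hi)) (not_lt.mp (key hi hj))

lemma arg_mem_Icc_of_mem_Pc (hpos : ∀ j, 0 < α j) {v : ℂ} (hv : v ∈ Pc α) :
    v.arg ∈ Icc (beta α) (π - beta α) := by
  obtain ⟨j, hj⟩ := mem_iUnion.mp hv
  refine ⟨beta_le_arg_of_mem_Pmid hpos hj, ?_⟩
  calc v.arg ≤ sig α (j + 1) := hj.2.2
    _ ≤ sig α d := sig_mono hpos j.is_lt
    _ = π - beta α := sig_card

lemma mem_Pc_iff_arg (hpos : ∀ j, 0 < α j) (hd : 0 < d) {v : ℂ} (hv : 0 ≤ v.im) :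
    v ∈ Pc α ↔ v.arg ∈ Icc (beta α) (π - beta α) := by
  refine ⟨arg_mem_Icc_of_mem_Pc hpos, fun ⟨hlo, hhi⟩ => ?_⟩
  have hlast : v.arg ≤ sig α (d - 1 + 1) := by rwa [Nat.sub_add_cancel hd, sig_card]
  have hex : ∃ m, v.arg ≤ sig α (m + 1) := ⟨d - 1, hlast⟩
  set j := Nat.find hex
  have hj : j < d := (Nat.find_min' hex hlast).trans_lt (Nat.sub_one_lt hd.ne')
  refine mem_iUnion.mpr ⟨⟨j, hj⟩, hv, ?_, Nat.find_spec hex⟩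
  dsimp only
  split_ifs with h0
  · rwa [sig_zero]
  · have := Nat.find_min hex (Nat.sub_one_lt h0)
    rwa [not_le, Nat.sub_add_cancel (Nat.pos_of_ne_zero h0)] at this

lemma im_pos_of_mem_Pc (hpos : ∀ j, 0 < α j) (hsum : ∑ k, α k < π) {v : ℂ}
    (hv : v ∈ Pc α) : 0 < v.im := by
  obtain ⟨hlo, hhi⟩ := arg_mem_Icc_of_mem_Pc hpos hv
  have hβ := beta_mem_Ioo hpos hsum
  have hv0 : v ≠ 0 := by rintro rfl; rw [arg_zero] at hlo; linarith [hβ.1]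
  rw [← norm_mul_sin_arg]
  exact mul_pos (norm_pos_iff.mpr hv0) (Real.sin_pos_of_pos_of_lt_pi (by linarith [hβ.1])
    (by linarith [hβ.1]))

lemma mem_P0_iff (hpos : ∀ j, 0 < α j) (hsum : ∑ k, α k < π) {v : ℂ} (hv : 0 < v.im) :
    v ∈ P0 α ↔ v.im * Real.cos (beta α) < v.re * Real.sin (beta α) := by
  rw [← arg_lt_iff_of_im_pos hv (beta_mem_Ioo hpos hsum)]
  exact ⟨fun h => h.2.2, fun h => ⟨hv.le, (arg_mem_Ioo_of_im_pos hv).1.le, h⟩⟩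

lemma mem_Pend_iff (hpos : ∀ j, 0 < α j) (hsum : ∑ k, α k < π) {v : ℂ} (hv : 0 < v.im) :
    v ∈ Pend α ↔ v.re * Real.sin (beta α) < -(v.im * Real.cos (beta α)) := by
  have h := (arg_le_iff_of_im_pos hv (pi_sub_beta_mem_Ioo hpos hsum)).not
  rw [Real.cos_pi_sub, Real.sin_pi_sub, mul_neg, not_le, not_le] at h
  rw [← h]
  exact ⟨fun h => h.2.1, fun h => ⟨hv.le, h, arg_le_pi v⟩⟩

lemma mem_Pc_iff (hpos : ∀ j, 0 < α j) (hsum : ∑ k, α k < π) (hd : 0 < d) {v : ℂ}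
    (hv : 0 < v.im) :
    v ∈ Pc α ↔ -(v.im * Real.cos (beta α)) ≤ v.re * Real.sin (beta α) ∧
      v.re * Real.sin (beta α) ≤ v.im * Real.cos (beta α) := by
  have h₁ := (arg_lt_iff_of_im_pos hv (beta_mem_Ioo hpos hsum)).not
  have h₂ := arg_le_iff_of_im_pos hv (pi_sub_beta_mem_Ioo hpos hsum)
  rw [not_lt, not_lt] at h₁
  rw [Real.cos_pi_sub, Real.sin_pi_sub, mul_neg] at h₂
  rw [mem_Pc_iff_arg hpos hd hv.le, mem_Icc, h₁, h₂, and_comm]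

end Cones

section Exchange
variable {d : ℕ} {α : Fin d → ℝ} {τ : Equiv.Perm (Fin d)}

lemma Emap_of_mem_Pmid (hpos : ∀ j, 0 < α j) {z : ℂ} {j : Fin d} (hj : z ∈ Pmid α j) :
    Emap α τ z = z * exp (theta α τ j * I) := by
  have hex : ∃ i, z ∈ Pmid α i := ⟨j, hj⟩
  rw [Emap, dif_pos hex, Pmid_unique hpos hex.choose_spec hj]

lemma Emap_of_notMem_Pc {z : ℂ} (hz : z ∉ Pc α) : Emap α τ z = z :=
  dif_neg fun ⟨j, hj⟩ => hz (mem_iUnion.mpr ⟨j, hj⟩)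

lemma norm_Emap (z : ℂ) : ‖Emap α τ z‖ = ‖z‖ := by
  unfold Emap
  split_ifs <;> simp [norm_exp_ofReal_mul_I]

lemma theta_eq_sub_sig (j : Fin d) :
    theta α τ j = (∑ k ∈ Finset.univ.filter (fun k : Fin d => τ k < τ j), α k)
      - (sig α j - beta α) := by
  simp only [theta, sig, Fin.lt_def, add_sub_cancel_left]

lemma arg_add_theta_mem_Icc (hpos : ∀ j, 0 < α j) {z : ℂ} {j : Fin d} (hj : z ∈ Pmid α j) :
    z.arg + theta α τ j ∈ Icc (beta α) (π - beta α) := by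
  set B := ∑ k ∈ Finset.univ.filter (fun k : Fin d => τ k < τ j), α k
  have hB : 0 ≤ B := Finset.sum_nonneg fun k _ => (hpos k).le
  have hBj : B + α j ≤ ∑ k, α k := by
    rw [add_comm, ← Finset.sum_insert (s := Finset.univ.filter _) (by simp)]
    exact Finset.sum_le_univ_sum_of_nonneg fun k => (hpos k).le
  have hlo := sig_le_arg_of_mem_Pmid hj
  have hhi := hj.2.2
  rw [sig_succ] at hhi
  rw [theta_eq_sub_sig, beta] at *
  constructor <;> linarith

lemma arg_Emap (hpos : ∀ j, 0 < α j) (hsum : ∑ k, α k < π) {z : ℂ} {j : Fin d}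
    (hj : z ∈ Pmid α j) : (Emap α τ z).arg = z.arg + theta α τ j := by
  have hsum_mem := arg_add_theta_mem_Icc (τ := τ) hpos hj
  have hz := arg_mem_Icc_of_mem_Pc hpos (mem_iUnion.mpr ⟨j, hj⟩)
  have hβ := beta_mem_Ioo hpos hsum
  have hz0 : z ≠ 0 := by
    rintro rfl
    linarith [arg_zero ▸ beta_le_arg_of_mem_Pmid hpos hj, hβ.1]
  have hexp : (exp (theta α τ j * I)).arg = theta α τ j := by
    rw [exp_mul_I]
    exact arg_cos_add_sin_mul_I
      ⟨by linarith [hz.2, hsum_mem.1, hβ.1], by linarith [hz.1, hsum_mem.2, hβ.1]⟩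
  have hadd : z.arg + (exp (theta α τ j * I)).arg ∈ Ioc (-π) π := by
    rw [hexp]
    exact ⟨by linarith [hsum_mem.1, hβ.1, Real.pi_pos], by linarith [hsum_mem.2, hβ.1]⟩
  rw [Emap_of_mem_Pmid hpos hj, (arg_mul_eq_add_arg_iff hz0 (exp_ne_zero _)).mpr hadd, hexp]

lemma Emap_mem_Pc (hpos : ∀ j, 0 < α j) (hsum : ∑ k, α k < π) {z : ℂ} (hz : z ∈ Pc α) :
    Emap α τ z ∈ Pc α := by
  obtain ⟨j, hj⟩ := mem_iUnion.mp hz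
  have harg := arg_Emap (τ := τ) hpos hsum hj
  have hmem := arg_add_theta_mem_Icc (τ := τ) hpos hj
  rw [← harg] at hmem
  refine (mem_Pc_iff_arg hpos j.pos ?_).mpr hmem
  exact arg_nonneg_iff.mp (by linarith [hmem.1, beta_pos hsum])

lemma ofReal_mul_mem_Pmid {r : ℝ} (hr : 0 < r) {z : ℂ} {j : Fin d} (hj : z ∈ Pmid α j) :
    (r : ℂ) * z ∈ Pmid α j := by
  obtain ⟨him, hlo, hhi⟩ := hj
  exact ⟨by rw [im_ofReal_mul]; positivity, by rwa [arg_real_mul z hr],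
    by rwa [arg_real_mul z hr]⟩

lemma ofReal_mul_mem_Pc {r : ℝ} (hr : 0 < r) {z : ℂ} (hz : z ∈ Pc α) :
    (r : ℂ) * z ∈ Pc α :=
  let ⟨j, hj⟩ := mem_iUnion.mp hz
  mem_iUnion.mpr ⟨j, ofReal_mul_mem_Pmid hr hj⟩

lemma Emap_ofReal_mul (hpos : ∀ j, 0 < α j) {r : ℝ} (hr : 0 < r) {z : ℂ} (hz : z ∈ Pc α) :
    Emap α τ (r * z) = r * Emap α τ z := by
  obtain ⟨j, hj⟩ := mem_iUnion.mp hz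
  rw [Emap_of_mem_Pmid hpos hj, Emap_of_mem_Pmid hpos (ofReal_mul_mem_Pmid hr hj), mul_assoc]

end Exchange

section Translation
variable {d : ℕ} {α : Fin d → ℝ} {τ : Equiv.Perm (Fin d)} {lam eta : ℝ}

lemma Fmap_of_mem_P0 (hpos : ∀ j, 0 < α j) {v : ℂ} (hv : v ∈ P0 α) :
    Fmap α τ lam eta v = v - 1 := by
  have hv' : v ∉ Pc α := fun h => (arg_mem_Icc_of_mem_Pc hpos h).1.not_gt hv.2.2
  rw [Fmap, Emap_of_notMem_Pc hv', Gmap, if_pos hv]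

lemma Fmap_of_mem_Pend (hpos : ∀ j, 0 < α j) {v : ℂ} (hv : v ∈ Pend α) :
    Fmap α τ lam eta v = v + lam := by
  have hv' : v ∉ Pc α := fun h => (arg_mem_Icc_of_mem_Pc hpos h).2.not_gt hv.2.1
  have hv0 : v ∉ P0 α := fun h => by linarith [h.2.2, hv.2.1, beta_le_pi_div_two hpos]
  rw [Fmap, Emap_of_notMem_Pc hv', Gmap, if_neg hv0, if_pos hv]

lemma Fmap_of_mem_Pc (hpos : ∀ j, 0 < α j) (hsum : ∑ k, α k < π) {z : ℂ}
    (hz : z ∈ Pc α) : Fmap α τ lam eta z = Emap α τ z - eta := by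
  have hw := Emap_mem_Pc (τ := τ) hpos hsum hz
  have harg := arg_mem_Icc_of_mem_Pc hpos hw
  have hw0 : Emap α τ z ∉ P0 α := fun h => harg.1.not_gt h.2.2
  have hwend : Emap α τ z ∉ Pend α := fun h => harg.2.not_gt h.2.1
  rw [Fmap, Gmap, if_neg hw0, if_neg hwend, if_pos hw]

end Translation

/-- The horizontal line through `w` meets `P_c` in `w - lam * [windowLo, windowHi]`. -/
def windowLo {d : ℕ} (α : Fin d → ℝ) (lam : ℝ) (w : ℂ) : ℝ :=
  (w.re * Real.sin (beta α) - w.im * Real.cos (beta α)) / (lam * Real.sin (beta α))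

def windowHi {d : ℕ} (α : Fin d → ℝ) (lam : ℝ) (w : ℂ) : ℝ :=
  (w.re * Real.sin (beta α) + w.im * Real.cos (beta α)) / (lam * Real.sin (beta α))

section Window
variable {d : ℕ} {α : Fin d → ℝ} {τ : Equiv.Perm (Fin d)} {lam eta : ℝ} {w : ℂ}

lemma windowLo_ofReal_mul (r : ℝ) : windowLo α lam (r * w) = r * windowLo α lam w := by
  simp only [windowLo, re_ofReal_mul, im_ofReal_mul]; ring

lemma windowHi_ofReal_mul (r : ℝ) : windowHi α lam (r * w) = r * windowHi α lam w := by
  simp only [windowHi, re_ofReal_mul, im_ofReal_mul]; ring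

lemma sub_mem_P0_iff (hpos : ∀ j, 0 < α j) (hsum : ∑ k, α k < π) (hlam : 0 < lam)
    (hw : 0 < w.im) {x : ℝ} : w - ↑(lam * x) ∈ P0 α ↔ x < windowLo α lam w := by
  have hs := sin_beta_pos hpos hsum
  rw [mem_P0_iff hpos hsum (by simpa using hw), windowLo, lt_div_iff₀ (by positivity)]
  simp only [sub_re, sub_im, ofReal_re, ofReal_im, sub_zero]
  constructor <;> intro h <;> linarith

lemma sub_mem_Pend_iff (hpos : ∀ j, 0 < α j) (hsum : ∑ k, α k < π) (hlam : 0 < lam)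
    (hw : 0 < w.im) {x : ℝ} : w - ↑(lam * x) ∈ Pend α ↔ windowHi α lam w < x := by
  have hs := sin_beta_pos hpos hsum
  rw [mem_Pend_iff hpos hsum (by simpa using hw), windowHi, div_lt_iff₀ (by positivity)]
  simp only [sub_re, sub_im, ofReal_re, ofReal_im, sub_zero]
  constructor <;> intro h <;> linarith

lemma sub_mem_Pc_iff (hpos : ∀ j, 0 < α j) (hsum : ∑ k, α k < π) (hd : 0 < d)
    (hlam : 0 < lam) (hw : 0 < w.im) {x : ℝ} :
    w - ↑(lam * x) ∈ Pc α ↔ x ∈ Icc (windowLo α lam w) (windowHi α lam w) := by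
  have hs := sin_beta_pos hpos hsum
  rw [mem_Pc_iff hpos hsum hd (by simpa using hw), windowLo, windowHi, mem_Icc,
    div_le_iff₀ (by positivity), le_div_iff₀ (by positivity)]
  simp only [sub_re, sub_im, ofReal_re, ofReal_im, sub_zero]
  constructor <;> rintro ⟨h₁, h₂⟩ <;> constructor <;> linarith

lemma Fmap_sub_of_notMem {k : ℕ} (hpos : ∀ j, 0 < α j) (hsum : ∑ k, α k < π)
    (hlam : 0 < lam) (hlamk : lam * (k + Phi) = 1) (hw : 0 < w.im) {x : ℝ}
    (hx : x ∉ Icc (windowLo α lam w) (windowHi α lam w)) :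
    Fmap α τ lam eta (w - ↑(lam * x)) = w - ↑(lam * lineStep k (windowLo α lam w) x) := by
  rcases lt_or_ge x (windowLo α lam w) with h | h
  · rw [Fmap_of_mem_P0 hpos ((sub_mem_P0_iff hpos hsum hlam hw).mpr h), lineStep_of_lt h,
      mul_add, hlamk]
    push_cast; ring
  · have hhi : windowHi α lam w < x := not_le.mp fun h' => hx ⟨h, h'⟩
    rw [Fmap_of_mem_Pend hpos ((sub_mem_Pend_iff hpos hsum hlam hw).mpr hhi), lineStep_of_le h]
    push_cast; ring

lemma Fmap_iterate_sub {k : ℕ} (hpos : ∀ j, 0 < α j) (hsum : ∑ k, α k < π) (hlam : 0 < lam)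
    (hlamk : lam * (k + Phi) = 1) (hw : 0 < w.im) {x : ℝ} {T : ℕ}
    (havoid : OrbitAvoids (lineStep k (windowLo α lam w))
      (Icc (windowLo α lam w) (windowHi α lam w)) x T) {i : ℕ} (hi : i ≤ T) :
    (Fmap α τ lam eta)^[i] (w - ↑(lam * x))
      = w - ↑(lam * (lineStep k (windowLo α lam w))^[i] x) := by
  induction i with
  | zero => rfl
  | succ i ih =>
    rw [Function.iterate_succ_apply', ih (by omega), Function.iterate_succ_apply',
      Fmap_sub_of_notMem hpos hsum hlam hlamk hw (havoid i (by omega))]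

end Window

section FirstReturn
variable {d : ℕ} {α : Fin d → ℝ} {τ : Equiv.Perm (Fin d)} {lam eta : ℝ}

lemma Rmap_eq_of_isLeast {z : ℂ} {n : ℕ} (h : IsLeast (hitSet α τ lam eta z) n) :
    Rmap α τ lam eta z = (Fmap α τ lam eta)^[n] z := by
  rw [Rmap, hitTime, h.csInf_eq]

theorem hitSet_nonempty_and_Rmap_eq {k : ℕ} (hpos : ∀ j, 0 < α j) (hsum : ∑ k, α k < π)
    (hk : 1 ≤ k) (hlam : 0 < lam) (hlamk : lam * (k + Phi) = 1) (heta : eta = lam * Phi)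
    {z : ℂ} (hz : z ∈ Pc α)
    (hwin : -(1 / 2) < windowLo α lam (Emap α τ z) ∧ windowHi α lam (Emap α τ z) < 1 / 2) :
    (hitSet α τ lam eta z).Nonempty ∧
      Rmap α τ lam eta z = Emap α τ z - ↑(lam * phiErr
        (sInf (phiVisits (windowLo α lam (Emap α τ z)) (windowHi α lam (Emap α τ z))))) := by
  obtain ⟨j, -⟩ := mem_iUnion.mp hz
  obtain ⟨hlo, hhi⟩ := hwin
  set w := Emap α τ z
  set lo := windowLo α lam w
  set hi := windowHi α lam w
  have hwPc : w ∈ Pc α := Emap_mem_Pc hpos hsum hz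
  have hw : 0 < w.im := im_pos_of_mem_Pc hpos hsum hwPc
  have hmem (x : ℝ) : w - ↑(lam * x) ∈ Pc α ↔ x ∈ Icc lo hi :=
    sub_mem_Pc_iff hpos hsum j.pos hlam hw
  have h0 : (0 : ℝ) ∈ Icc lo hi := (hmem 0).mp (by simpa using hwPc)
  have hlohi : lo < hi := by
    have hc := Real.cos_pos_of_mem_Ioo
      ⟨by linarith [beta_pos hsum, Real.pi_pos], beta_lt_pi_div_two hpos j⟩
    have hs := sin_beta_pos hpos hsum
    exact div_lt_div_of_pos_right (by nlinarith) (by positivity)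
  have hne := phiVisits_nonempty h0.1 h0.2 hlohi
  obtain ⟨T, hT, havoid⟩ := exists_lineStep_iterate_eq_phiErr hk h0.1 h0.2 hlo hhi hne
  have horbit : ∀ i ≤ T, (Fmap α τ lam eta)^[i + 1] z
      = w - ↑(lam * (lineStep k lo)^[i] Phi) := fun i hi => by
    rw [Function.iterate_succ_apply, Fmap_of_mem_Pc hpos hsum hz, heta,
      ← Fmap_iterate_sub hpos hsum hlam hlamk hw havoid hi]
  have hleast : IsLeast (hitSet α τ lam eta z) (T + 1) := by
    refine ⟨⟨T.succ_pos, ?_⟩, fun n ⟨hn, hnPc⟩ => ?_⟩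
    · rw [horbit T le_rfl, hmem, hT]
      exact (Nat.sInf_mem hne).2
    · by_contra! h
      obtain ⟨i, rfl⟩ := Nat.exists_eq_add_one_of_ne_zero hn.ne'
      rw [horbit i (by omega), hmem] at hnPc
      exact havoid i (by omega) hnPc
  exact ⟨hleast.nonempty, by rw [Rmap_eq_of_isLeast hleast, horbit T le_rfl, hT]⟩

lemma norm_mul_sin_beta_le_im (hpos : ∀ j, 0 < α j) (hsum : ∑ k, α k < π) {z : ℂ}
    (hz : z ∈ Pc α) : ‖z‖ * Real.sin (beta α) ≤ z.im := by
  obtain ⟨h₁, h₂⟩ := arg_mem_Icc_of_mem_Pc hpos hz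
  have hβ := beta_pos hsum
  rw [← norm_mul_sin_arg]
  gcongr
  rcases le_total z.arg (π / 2) with h | h
  · exact Real.sin_le_sin_of_le_of_le_pi_div_two (by linarith [Real.pi_pos]) h h₁
  · rw [← Real.sin_pi_sub z.arg]
    exact Real.sin_le_sin_of_le_of_le_pi_div_two (by linarith [Real.pi_pos]) (by linarith)
      (by linarith)

lemma neg_half_lt_windowLo_and_windowHi_lt_half (hpos : ∀ j, 0 < α j)
    (hsum : ∑ k, α k < π) (hlam : 0 < lam) {z : ℂ} (hz : z ∈ Pc α)
    (hzy : z.im < lam * Real.sin (beta α) ^ 2 / 4) :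
    -(1 / 2) < windowLo α lam (Emap α τ z) ∧ windowHi α lam (Emap α τ z) < 1 / 2 := by
  obtain ⟨j, -⟩ := mem_iUnion.mp hz
  set w := Emap α τ z
  set s := Real.sin (beta α)
  set c := Real.cos (beta α)
  have hs : 0 < s := sin_beta_pos hpos hsum
  have hwPc : w ∈ Pc α := Emap_mem_Pc hpos hsum hz
  have hw : 0 < w.im := im_pos_of_mem_Pc hpos hsum hwPc
  have hcrit := (mem_Pc_iff hpos hsum j.pos hw).mp hwPc
  have himw : w.im * s < lam * s ^ 2 / 4 := calc
    w.im * s ≤ ‖w‖ * s := by gcongr; exact im_le_norm w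
    _ = ‖z‖ * s := by rw [norm_Emap]
    _ ≤ z.im := norm_mul_sin_beta_le_im hpos hsum hz
    _ < _ := hzy
  have hwc : w.im * c < lam * s / 4 := by
    have : w.im * c ≤ w.im := mul_le_of_le_one_right hw.le (Real.cos_le_one _)
    nlinarith
  rw [windowLo, windowHi, lt_div_iff₀ (by positivity), div_lt_iff₀ (by positivity)]
  constructor <;> linarith [hcrit.1, hcrit.2]

end FirstReturn

theorem renormalization_of_TCE_general
    (d : ℕ) (α : Fin d → ℝ) (hpos : ∀ j, 0 < α j) (hsum : ∑ k, α k < π)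
    (τ : Equiv.Perm (Fin d)) (k : ℕ) (hk : 1 ≤ k) (lam eta : ℝ)
    (hlam : lam = 1 / (k + Phi)) (heta : eta = 1 - k * lam) :
    ∃ ystar : ℝ, 0 < ystar ∧ ∀ z ∈ Pc α, z.im < ystar →
      (hitSet α τ lam eta z).Nonempty ∧
      (hitSet α τ lam eta (((Phi ^ 2 : ℝ) : ℂ) * z)).Nonempty ∧
      Rmap α τ lam eta (((Phi ^ 2 : ℝ) : ℂ) * z) = ((Phi ^ 2 : ℝ) : ℂ) * Rmap α τ lam eta z := by
  have hkPhi : 0 < (k : ℝ) + Phi := by linarith [Phi_pos]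
  have hlam_pos : 0 < lam := by rw [hlam]; positivity
  have hlamk : lam * (k + Phi) = 1 := by rw [hlam, one_div, inv_mul_cancel₀ hkPhi.ne']
  have heta' : eta = lam * Phi := by rw [heta]; linear_combination -hlamk
  have hs := sin_beta_pos hpos hsum
  refine ⟨lam * Real.sin (beta α) ^ 2 / 4, by positivity, fun z hz hzy => ?_⟩
  have hz' := ofReal_mul_mem_Pc Phi_sq_pos hz
  have hzy' : (((Phi ^ 2 : ℝ) : ℂ) * z).im < lam * Real.sin (beta α) ^ 2 / 4 := by
    rw [im_ofReal_mul]
    nlinarith [Phi_sq_lt_one_half, Phi_sq_pos, im_pos_of_mem_Pc hpos hsum hz]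
  have hwin := neg_half_lt_windowLo_and_windowHi_lt_half (τ := τ) hpos hsum hlam_pos hz hzy
  have hwin' := neg_half_lt_windowLo_and_windowHi_lt_half (τ := τ) hpos hsum hlam_pos hz' hzy'
  obtain ⟨hne, hR⟩ := hitSet_nonempty_and_Rmap_eq hpos hsum hk hlam_pos hlamk heta' hz hwin
  obtain ⟨hne', hR'⟩ := hitSet_nonempty_and_Rmap_eq hpos hsum hk hlam_pos hlamk heta' hz' hwin'
  refine ⟨hne, hne', ?_⟩
  rw [hR', hR, Emap_ofReal_mul hpos Phi_sq_pos hz, windowLo_ofReal_mul, windowHi_ofReal_mul,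
    phiErr_sInf_phiVisits_mul hwin.1 hwin.2]
  push_cast; ring

/-- **Theorem A (renormalization of translated cone exchanges).**
For λ = 1/(k+Φ) and η = 1 − kλ (k ≥ 1 an integer), every admissible α and every
permutation τ, the first return map R of F to the middle cone P_c satisfies
R(Φ²z) = Φ²·R(z) for all z ∈ P_c sufficiently close to the real axis, the return
times being finite. -/
theorem renormalization_of_TCE
    (d : ℕ) (hd : 1 ≤ d) (α : Fin d → ℝ) (hpos : ∀ j, 0 < α j) (hsum : ∑ k, α k < π)
    (τ : Equiv.Perm (Fin d)) (k : ℕ) (hk : 1 ≤ k) (lam eta : ℝ)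
    (hlam : lam = 1 / (k + Phi)) (heta : eta = 1 - k * lam) :
    ∃ ystar : ℝ, 0 < ystar ∧ ∀ z ∈ Pc α, z.im < ystar →
      (hitSet α τ lam eta z).Nonempty ∧
      (hitSet α τ lam eta (((Phi ^ 2 : ℝ) : ℂ) * z)).Nonempty ∧
      Rmap α τ lam eta (((Phi ^ 2 : ℝ) : ℂ) * z) = ((Phi ^ 2 : ℝ) : ℂ) * Rmap α τ lam eta z :=
  renormalization_of_TCE_general d α hpos hsum τ k hk lam eta hlam heta

end
end

section
/- Rigidity of the orbit of 1 under perturbation (Lemma 2.3). Let λ > 0 be irrational. (i) For every integer N ≥ 0 and every ℓ with 0 ≤ ℓ < d⁺(N) and ℓ ≤ 1, one has g^n(1−ℓ) = g^n(1) − ℓ for all 0 ≤ n ≤ N. (ii) For every integer N ≥ 2 and every ℓ with 0 ≤ ℓ ≤ d⁻(N) and ℓ ≤ λ, one has g^n(1+ℓ) = g^n(1) + ℓ for all 2 ≤ n ≤ N. -/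
open Real Set
open scoped Classical

noncomputable section

/-- The interval exchange g(x) = x+λ on [0,1], x−1 on (1, 1+λ]. -/
def g0 (lam x : ℝ) : ℝ := if x ≤ 1 then x + lam else x - 1

/-- d⁻(N) = 1 if g^n(1) > 1 for all 1 ≤ n ≤ N, and
d⁻(N) = 1 − max{g^n(1) : 1 ≤ n ≤ N, g^n(1) ≤ 1} otherwise. -/
def dminus (lam : ℝ) (N : ℕ) : ℝ :=
  if ∀ n : ℕ, 1 ≤ n → n ≤ N → 1 < (g0 lam)^[n] 1 then 1
  else 1 - sSup {y : ℝ | ∃ n : ℕ, 1 ≤ n ∧ n ≤ N ∧ (g0 lam)^[n] 1 = y ∧ y ≤ 1}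

/-- d⁺(N) = λ if g^n(1) < 1 for all 1 ≤ n ≤ N, and
d⁺(N) = min{g^n(1) : 1 ≤ n ≤ N, g^n(1) ≥ 1} − 1 otherwise. -/
def dplus (lam : ℝ) (N : ℕ) : ℝ :=
  if ∀ n : ℕ, 1 ≤ n → n ≤ N → (g0 lam)^[n] 1 < 1 then lam
  else sInf {y : ℝ | ∃ n : ℕ, 1 ≤ n ∧ n ≤ N ∧ (g0 lam)^[n] 1 = y ∧ 1 ≤ y} - 1

lemma g0_le (lam x : ℝ) (h : x ≤ 1) : g0 lam x = x + lam := if_pos h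

lemma g0_gt (lam x : ℝ) (h : 1 < x) : g0 lam x = x - 1 := if_neg (not_le.mpr h)

lemma g0_pos (lam : ℝ) (hlam : 0 < lam) (m : ℕ) : 0 < (g0 lam)^[m] 1 := by
  induction m with
  | zero => norm_num
  | succ m ih =>
    rw [Function.iterate_succ_apply']
    rcases le_or_gt ((g0 lam)^[m] 1) 1 with h | h
    · rw [g0_le lam _ h]; linarith
    · rw [g0_gt lam _ h]; linarith

/-- **Lemma 2.3 (rigidity of the orbit of 1 under perturbation).**
(i) For 0 ≤ ℓ < d⁺(N) (ℓ ≤ 1), g^n(1−ℓ) = g^n(1) − ℓ for all 0 ≤ n ≤ N.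
(ii) For N ≥ 2 and 0 ≤ ℓ ≤ d⁻(N) (ℓ ≤ λ), g^n(1+ℓ) = g^n(1) + ℓ for 2 ≤ n ≤ N. -/
theorem orbit_rigidity (lam : ℝ) (hlam : 0 < lam) (hirr : Irrational lam) :
    (∀ N : ℕ, ∀ l : ℝ, 0 ≤ l → l < dplus lam N → l ≤ 1 →
      ∀ n : ℕ, n ≤ N → (g0 lam)^[n] (1 - l) = (g0 lam)^[n] 1 - l) ∧
    (∀ N : ℕ, 2 ≤ N → ∀ l : ℝ, 0 ≤ l → l ≤ dminus lam N → l ≤ lam →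
      ∀ n : ℕ, 2 ≤ n → n ≤ N → (g0 lam)^[n] (1 + l) = (g0 lam)^[n] 1 + l) := by
  constructor
  · -- part (i)
    intro N l hl0 hld hl1 n hn
    induction n with
    | zero => simp
    | succ n ih =>
      have hn' : n ≤ N := Nat.le_of_succ_le hn
      rw [Function.iterate_succ_apply', Function.iterate_succ_apply', ih hn']
      by_cases hb : (g0 lam)^[n] 1 ≤ 1
      · have h2 : (g0 lam)^[n] 1 - l ≤ 1 := by linarith
        rw [g0_le lam _ h2, g0_le lam _ hb]
        ring
      · push_neg at hb
        have hn1 : 1 ≤ n := by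
          by_contra h
          push_neg at h
          interval_cases n
          simp at hb
        have hcond : ¬ ∀ m : ℕ, 1 ≤ m → m ≤ N → (g0 lam)^[m] 1 < 1 := by
          push_neg
          exact ⟨n, hn1, hn', le_of_lt hb⟩
        have hmem : (g0 lam)^[n] 1 ∈
            {y : ℝ | ∃ m : ℕ, 1 ≤ m ∧ m ≤ N ∧ (g0 lam)^[m] 1 = y ∧ 1 ≤ y} :=
          ⟨n, hn1, hn', rfl, le_of_lt hb⟩
        have hbdd : BddBelow
            {y : ℝ | ∃ m : ℕ, 1 ≤ m ∧ m ≤ N ∧ (g0 lam)^[m] 1 = y ∧ 1 ≤ y} :=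
          ⟨1, fun y hy => hy.choose_spec.2.2.2⟩
        have hinf := csInf_le hbdd hmem
        rw [dplus, if_neg hcond] at hld
        have h1 : 1 < (g0 lam)^[n] 1 - l := by linarith
        rw [g0_gt lam _ h1, g0_gt lam _ hb]
        ring
  · -- part (ii)
    intro N hN l hl0 hld hll n hn2 hnN
    have hpos := g0_pos lam hlam
    -- key: if 1 ≤ m ≤ N and g^[m] 1 ≤ 1 then g^[m] 1 + l ≤ 1
    have key : ∀ m : ℕ, 1 ≤ m → m ≤ N → (g0 lam)^[m] 1 ≤ 1 →
        (g0 lam)^[m] 1 + l ≤ 1 := by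
      intro m hm1 hmN hm
      have hcond : ¬ ∀ k : ℕ, 1 ≤ k → k ≤ N → 1 < (g0 lam)^[k] 1 := by
        push_neg
        exact ⟨m, hm1, hmN, hm⟩
      rw [dminus, if_neg hcond] at hld
      have hmem : (g0 lam)^[m] 1 ∈
          {y : ℝ | ∃ k : ℕ, 1 ≤ k ∧ k ≤ N ∧ (g0 lam)^[k] 1 = y ∧ y ≤ 1} :=
        ⟨m, hm1, hmN, rfl, hm⟩
      have hbdd : BddAbove
          {y : ℝ | ∃ k : ℕ, 1 ≤ k ∧ k ≤ N ∧ (g0 lam)^[k] 1 = y ∧ y ≤ 1} :=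
        ⟨1, fun y hy => hy.choose_spec.2.2.2⟩
      have := le_csSup hbdd hmem
      linarith
    have hl1 : l ≤ 1 := by
      by_cases hc : ∀ k : ℕ, 1 ≤ k → k ≤ N → 1 < (g0 lam)^[k] 1
      · rw [dminus, if_pos hc] at hld; exact hld
      · push_neg at hc
        obtain ⟨m, hm1, hmN, hm⟩ := hc
        have := key m hm1 hmN hm
        have := hpos m
        linarith
    -- base case n = 2
    have base : (g0 lam)^[2] (1 + l) = (g0 lam)^[2] 1 + l := by
      have h2 : (g0 lam)^[2] 1 = lam := by
        show g0 lam (g0 lam 1) = lam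
        rw [g0_le lam 1 le_rfl, g0_gt lam _ (by linarith)]
        ring
      rcases hl0.eq_or_lt with h | h
      · rw [← h]; simp [h2]
      · show g0 lam (g0 lam (1 + l)) = (g0 lam)^[2] 1 + l
        rw [g0_gt lam (1 + l) (by linarith), g0_le lam (1 + l - 1) (by linarith), h2]
        ring
    -- induction from 2
    clear hN
    induction n with
    | zero => omega
    | succ n ih =>
      rcases Nat.lt_or_ge n 2 with h | h
      · have : n = 1 := by omega
        subst this
        exact base
      · have hn' : n ≤ N := Nat.le_of_succ_le hnN
        rw [Function.iterate_succ_apply', Function.iterate_succ_apply',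
          ih (by omega) hn']
        by_cases hb : (g0 lam)^[n] 1 ≤ 1
        · have h2 : (g0 lam)^[n] 1 + l ≤ 1 := key n (by omega) hn' hb
          rw [g0_le lam _ h2, g0_le lam _ hb]
          ring
        · push_neg at hb
          have h1 : 1 < (g0 lam)^[n] 1 + l := by linarith
          rw [g0_gt lam _ h1, g0_gt lam _ hb]
          ring

end
end

section
/- Orbits of nearby points under maps with smaller middle interval (Lemma 2.4). Let λ > 0 be irrational, let 0 < ℓ' < ℓ ≤ λ, and let x ∈ I \ [1, 1+ℓ] with n_ℓ(x) < ∞. Suppose there exists 0 ≤ n ≤ n_ℓ(x) with g^n(x) ≤ 1, and set d⁻(x) = 1 − max{g^n(x) : 0 ≤ n ≤ n_ℓ(x), g^n(x) ≤ 1}. Then for every x' ∈ I with x − (ℓ − ℓ') < x' < x + d⁻(x): g_ℓ^n(x) − g_{ℓ'}^n(x') = x − x' for all 0 ≤ n ≤ n_ℓ(x), and n_{ℓ'}(x') ≥ n_ℓ(x). -/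
open Real Set
open scoped Classical

noncomputable section

/-- The interval map g_ℓ with middle interval (1, 1+ℓ) of fixed points:
g_ℓ(x) = x+λ on [0,1], x on (1,1+ℓ), x−1 on [1+ℓ, 1+λ]. -/
def gl (lam l x : ℝ) : ℝ :=
  if x ≤ 1 then x + lam else if x < 1 + l then x else x - 1

/-- The set of positive times at which the g_ℓ-orbit of x visits [1, 1+ℓ]. -/
def hitSetI (lam l x : ℝ) : Set ℕ :=
  {n : ℕ | 0 < n ∧ (gl lam l)^[n] x ∈ Set.Icc 1 (1 + l)}

/-- The first hitting time n_ℓ(x) of x to [1, 1+ℓ] (as a natural number; 0 if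
the orbit never hits). -/
def nhit (lam l x : ℝ) : ℕ := sInf (hitSetI lam l x)

/-- The first hitting time n_ℓ(x) of x to [1, 1+ℓ], with value ∞ ∈ ℕ∪{∞} if the
orbit never hits. -/
def nhitE (lam l x : ℝ) : ℕ∞ := sInf ((fun n : ℕ => (n : ℕ∞)) '' hitSetI lam l x)

/-- The first hitting map r_ℓ(x) = g_ℓ^{n_ℓ(x)}(x). -/
def rmap (lam l x : ℝ) : ℝ := (gl lam l)^[nhit lam l x] x

/-- r'_ℓ(x) = r_ℓ(x) outside [1,1+ℓ] and x on [1,1+ℓ]. -/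
def rmap' (lam l x : ℝ) : ℝ := if x ∈ Set.Icc 1 (1 + l) then x else rmap lam l x

/-- The left bifurcation set Λ_L (hitting times compared in ℕ∪{∞}). -/
def LamL (lam : ℝ) : Set ℝ :=
  {l | 0 < l ∧ l ≤ lam ∧ ∀ l' : ℝ, 0 < l' → l' < l → nhitE lam l 1 < nhitE lam l' 1}

/-- The right bifurcation set Λ_R (hitting times compared in ℕ∪{∞}). -/
def LamR (lam : ℝ) : Set ℝ :=
  {l | 0 < l ∧ l ≤ lam ∧
    ∀ l' : ℝ, 0 < l' → l' < l → nhitE lam l (1 + l) < nhitE lam l' (1 + l')}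

/-!
Off the middle interval `g_ℓ` is the interval exchange `g`, so before its hitting time the
`g_ℓ`-orbit of `x` is the `g`-orbit. Shifting `x` to `x' = x - δ` with `-d⁻(x) < δ < ℓ - ℓ'`,
an orbit point `y ≤ 1` has `y ≤ 1 - d⁻(x)`, so `y - δ < 1`, while an orbit point `y > 1 + ℓ`
has `y - δ > 1 + ℓ' ≥ 1`. Hence `y - δ` takes the same branch of `g_ℓ'` as `y` does of `g_ℓ` and
never lies in `[1, 1 + ℓ']`: the two orbits stay parallel, and the shifted one cannot hit
`[1, 1 + ℓ']` before time `n_ℓ(x)`.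
-/

theorem Function.iterate_eq_iterate_of_forall_lt {α : Type*} {f g : α → α} {x : α} {n : ℕ}
    (h : ∀ k < n, f (f^[k] x) = g (f^[k] x)) : f^[n] x = g^[n] x := by
  induction n with
  | zero => rfl
  | succ n ih =>
    rw [Function.iterate_succ_apply', Function.iterate_succ_apply',
      ← ih fun k hk => h k (hk.trans n.lt_succ_self), h n n.lt_succ_self]

section

variable {lam l l' y y' : ℝ}

lemma gl_eq_g0_of_notMem (hy : y ∉ Icc 1 (1 + l)) : gl lam l y = g0 lam y := by
  rw [mem_Icc, not_and_or, not_le, not_le] at hy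
  unfold gl g0
  split_ifs <;> first | rfl | (exfalso; rcases hy with hy | hy <;> linarith)

lemma notMem_Icc_of_notMem_Icc (hy : y ∉ Icc 1 (1 + l)) (hlow : y - (l - l') < y')
    (hhigh : y ≤ 1 → y' < 1) : y' ∉ Icc 1 (1 + l') := by
  rw [mem_Icc, not_and_or, not_le, not_le] at hy ⊢
  by_cases h : y ≤ 1
  · exact Or.inl (hhigh h)
  · right
    rcases hy with hy | hy <;> linarith

lemma gl_sub_gl_eq_sub (hl' : 0 ≤ l') (hy : y ∉ Icc 1 (1 + l))
    (hlow : y - (l - l') < y') (hhigh : y ≤ 1 → y' < 1) : gl lam l y - gl lam l' y' = y - y' := by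
  have hy' := notMem_Icc_of_notMem_Icc hy hlow hhigh
  rw [gl_eq_g0_of_notMem hy, gl_eq_g0_of_notMem hy']
  rw [mem_Icc, not_and_or, not_le, not_le] at hy
  unfold g0
  by_cases h : y ≤ 1
  · rw [if_pos h, if_pos (hhigh h).le]
    ring
  · have : ¬y' ≤ 1 := by rcases hy with hy | hy <;> linarith
    rw [if_neg h, if_neg this]
    ring

end

section

variable {lam l l' x x' : ℝ} {N : ℕ}

lemma iterate_gl_sub_iterate_gl (hl' : 0 ≤ l') (hout : ∀ k < N, (gl lam l)^[k] x ∉ Icc 1 (1 + l))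
    (hlow : x - (l - l') < x')
    (hbelow : ∀ k < N, (gl lam l)^[k] x ≤ 1 → (gl lam l)^[k] x - (x - x') < 1) :
    ∀ n ≤ N, (gl lam l)^[n] x - (gl lam l')^[n] x' = x - x' := by
  intro n hn
  induction n with
  | zero => simp
  | succ k ih =>
    have hk : k < N := hn
    have hpar := ih hk.le
    rw [Function.iterate_succ_apply', Function.iterate_succ_apply',
      gl_sub_gl_eq_sub hl' (hout k hk) (by linarith) fun h => by linarith [hbelow k hk h], hpar]

lemma iterate_gl_notMem_of_lt_nhit (hxm : x ∉ Icc 1 (1 + l)) {k : ℕ}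
    (hk : k < nhit lam l x) : (gl lam l)^[k] x ∉ Icc 1 (1 + l) := by
  rcases k.eq_zero_or_pos with rfl | hpos
  · exact hxm
  · exact fun hmem => (Nat.sInf_le (show k ∈ hitSetI lam l x from ⟨hpos, hmem⟩)).not_gt hk

lemma nhitE_le_of_mem {n : ℕ} (hn : n ∈ hitSetI lam l x) : nhitE lam l x ≤ n :=
  sInf_le ⟨n, hn, rfl⟩

lemma le_nhitE_of_forall_notMem {n : ℕ}
    (h : ∀ k, 0 < k → k < n → (gl lam l)^[k] x ∉ Icc 1 (1 + l)) : (n : ℕ∞) ≤ nhitE lam l x := by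
  refine le_sInf ?_
  rintro _ ⟨m, ⟨hm, hmem⟩, rfl⟩
  exact Nat.cast_le.mpr (not_lt.mp fun hmn => h m hm hmn hmem)

end

theorem parallel_orbits_general
    (lam : ℝ)
    (l l' : ℝ) (hl'0 : 0 < l')
    (x : ℝ) (hxm : x ∉ Set.Icc 1 (1 + l))
    (hfin : (hitSetI lam l x).Nonempty)
    (dm : ℝ)
    (hdm : dm = 1 - sSup {y : ℝ | ∃ n : ℕ, n ≤ nhit lam l x ∧ (g0 lam)^[n] x = y ∧ y ≤ 1}) :
    ∀ x' : ℝ, x' ∈ Set.Icc 0 (1 + lam) → x - (l - l') < x' → x' < x + dm →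
      (∀ n : ℕ, n ≤ nhit lam l x → (gl lam l)^[n] x - (gl lam l')^[n] x' = x - x') ∧
      nhitE lam l x ≤ nhitE lam l' x' := by
  intro x' _ hlow hhigh
  set N := nhit lam l x
  have hout : ∀ k < N, (gl lam l)^[k] x ∉ Icc 1 (1 + l) :=
    fun k hk => iterate_gl_notMem_of_lt_nhit hxm hk
  have hbelow : ∀ k < N, (gl lam l)^[k] x ≤ 1 → (gl lam l)^[k] x - (x - x') < 1 := by
    intro k hk hy
    have hg0 : (gl lam l)^[k] x = (g0 lam)^[k] x :=
      Function.iterate_eq_iterate_of_forall_lt fun j hj =>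
        gl_eq_g0_of_notMem (hout j (hj.trans hk))
    have hsup : (gl lam l)^[k] x ≤ sSup {y : ℝ | ∃ n : ℕ, n ≤ N ∧ (g0 lam)^[n] x = y ∧ y ≤ 1} :=
      le_csSup ⟨1, fun _ ⟨_, _, _, h⟩ => h⟩ ⟨k, hk.le, hg0.symm, hy⟩
    linarith
  have hpar := iterate_gl_sub_iterate_gl hl'0.le hout hlow hbelow
  refine ⟨hpar, (nhitE_le_of_mem (Nat.sInf_mem hfin)).trans <|
    le_nhitE_of_forall_notMem fun k _ hk => ?_⟩
  exact notMem_Icc_of_notMem_Icc (hout k hk) (by linarith [hpar k hk.le])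
    fun h => by linarith [hpar k hk.le, hbelow k hk h]

/-- **Lemma 2.4 (orbits of nearby points under maps with smaller middle
interval).** If 0 < ℓ' < ℓ ≤ λ, x ∈ I \ [1,1+ℓ] has finite hitting time and its
g-orbit up to the hitting time goes below 1, then for x' within
(x − (ℓ−ℓ'), x + d⁻(x)) the orbits of x under g_ℓ and of x' under g_{ℓ'} stay
parallel up to time n_ℓ(x), and n_{ℓ'}(x') ≥ n_ℓ(x). -/
theorem parallel_orbits
    (lam : ℝ) (hlam : 0 < lam) (hirr : Irrational lam)
    (l l' : ℝ) (hl'0 : 0 < l') (hl' : l' < l) (hl : l ≤ lam)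
    (x : ℝ) (hx : x ∈ Set.Icc 0 (1 + lam)) (hxm : x ∉ Set.Icc 1 (1 + l))
    (hfin : (hitSetI lam l x).Nonempty)
    (hbelow : ∃ n : ℕ, n ≤ nhit lam l x ∧ (g0 lam)^[n] x ≤ 1)
    (dm : ℝ)
    (hdm : dm = 1 - sSup {y : ℝ | ∃ n : ℕ, n ≤ nhit lam l x ∧ (g0 lam)^[n] x = y ∧ y ≤ 1}) :
    ∀ x' : ℝ, x' ∈ Set.Icc 0 (1 + lam) → x - (l - l') < x' → x' < x + dm →
      (∀ n : ℕ, n ≤ nhit lam l x → (gl lam l)^[n] x - (gl lam l')^[n] x' = x - x') ∧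
      nhitE lam l x ≤ nhitE lam l' x' :=
  parallel_orbits_general lam l l' hl'0 x hxm hfin dm hdm

end
end

section
/- Characterization of bifurcation points (Theorem 2.5, first part). Let λ > 0 be irrational. A number ℓ ∈ (0, λ] is a left bifurcation point if and only if ℓ ∈ Λ_L, and ℓ is a right bifurcation point if and only if ℓ ∈ Λ_R. -/
open Real Set
open scoped Classical

noncomputable section

/-! For `l' < l`, a point `y` off `[1, 1 + l]` and `0 ≤ d ≤ l - l'` we have
`g_{l'}(y - d) = g_l(y) - d`, so until it enters `[1, 1 + l]` the `g_l`-orbit of `1` (resp. `1 + l`)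
is shadowed by the `g_{l'}`-orbit of `1` (resp. `1 + l'`) at offset `d = 0` (resp. `d = l - l'`).
Hence `n_{l'} ≥ n_l`, with equality iff `r_l - d ∈ [1, 1 + l']`. For `r_l ∈ [1, 1 + l]` this
fails for every `l' ∈ (0, l)` exactly when `r_l(1) = 1 + l` (resp. `r_l(1 + l) = 1`); if the orbit
never hits, `n_l = ∞` and `r_l` is the identity, so both sides are false. -/

section

variable {lam l l' d x y z : ℝ}

lemma gl_of_le (h : x ≤ 1) : gl lam l x = x + lam := if_pos h

lemma gl_of_one_add_le (hl : 0 < l) (h : 1 + l ≤ x) : gl lam l x = x - 1 := by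
  rw [gl, if_neg (by linarith), if_neg (by linarith)]

lemma sub_notMem_Icc (hd₀ : 0 ≤ d) (hd : d ≤ l - l') (hy : y ∉ Icc 1 (1 + l)) :
    y - d ∉ Icc 1 (1 + l') :=
  fun ⟨h₁, h₂⟩ => hy ⟨by linarith, by linarith⟩

lemma gl_sub (hl' : 0 < l') (hd₀ : 0 ≤ d) (hd : d ≤ l - l') (hy : y ∉ Icc 1 (1 + l)) :
    gl lam l' (y - d) = gl lam l y - d := by
  rcases lt_or_ge y 1 with h | h
  · rw [gl_of_le (by linarith), gl_of_le h.le]; ring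
  · have h' : 1 + l < y := lt_of_not_ge fun h' => hy ⟨h, h'⟩
    rw [gl_of_one_add_le hl' (by linarith), gl_of_one_add_le (by linarith) h'.le]; ring

lemma iterate_gl_sub (hl' : 0 < l') (hd₀ : 0 ≤ d) (hd : d ≤ l - l')
    (hz : gl lam l' z = gl lam l x - d) {N : ℕ}
    (hN : ∀ m, 0 < m → m < N → (gl lam l)^[m] x ∉ Icc 1 (1 + l)) :
    ∀ n, 0 < n → n ≤ N → (gl lam l')^[n] z = (gl lam l)^[n] x - d := by
  intro n hn
  induction n, hn using Nat.le_induction with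
  | base => exact fun _ => by simpa using hz
  | succ n hn ih =>
    intro hnN
    rw [Function.iterate_succ_apply', Function.iterate_succ_apply', ih (by omega),
      gl_sub hl' hd₀ hd (hN n hn (by omega))]

lemma nhit_mem_hitSetI (hS : (hitSetI lam l x).Nonempty) : nhit lam l x ∈ hitSetI lam l x :=
  Nat.sInf_mem hS

lemma rmap_mem_Icc (hS : (hitSetI lam l x).Nonempty) : rmap lam l x ∈ Icc 1 (1 + l) :=
  (nhit_mem_hitSetI hS).2

lemma iterate_notMem_Icc_of_lt_nhit {m : ℕ} (hm₀ : 0 < m) (hm : m < nhit lam l x) :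
    (gl lam l)^[m] x ∉ Icc 1 (1 + l) :=
  fun h => hm.not_ge (Nat.sInf_le ⟨hm₀, h⟩)

lemma nhitE_eq_nhit (hS : (hitSetI lam l x).Nonempty) : nhitE lam l x = nhit lam l x := by
  rw [nhitE, sInf_image, nhit, ENat.natCast_sInf hS]

lemma nhitE_eq_top (hS : hitSetI lam l x = ∅) : nhitE lam l x = ⊤ := by
  simp [nhitE, hS]

lemma rmap_eq_self (hS : hitSetI lam l x = ∅) : rmap lam l x = x := by
  rw [rmap, nhit, hS, Nat.sInf_empty, Function.iterate_zero_apply]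

lemma nhit_lt_nhitE_iff (hl' : 0 < l') (hd₀ : 0 ≤ d) (hd : d ≤ l - l')
    (hz : gl lam l' z = gl lam l x - d) (hS : (hitSetI lam l x).Nonempty) :
    (nhit lam l x : ℕ∞) < nhitE lam l' z ↔ rmap lam l x - d ∉ Icc 1 (1 + l') := by
  set N := nhit lam l x
  have hN₀ : 0 < N := (nhit_mem_hitSetI hS).1
  have hshadow := iterate_gl_sub hl' hd₀ hd hz (N := N) fun m hm₀ hm =>
    iterate_notMem_Icc_of_lt_nhit hm₀ hm
  constructor
  · intro hlt hmem
    have hN : N ∈ hitSetI lam l' z := ⟨hN₀, by rwa [hshadow N hN₀ le_rfl]⟩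
    exact hlt.not_ge (sInf_le ⟨N, hN, rfl⟩)
  · intro hnot
    have hle : ((N + 1 : ℕ) : ℕ∞) ≤ nhitE lam l' z := by
      refine le_sInf ?_
      rintro _ ⟨m, ⟨hm₀, hm⟩, rfl⟩
      by_contra! hmN
      rw [Nat.cast_lt, Nat.lt_succ_iff] at hmN
      rw [hshadow m hm₀ hmN] at hm
      rcases hmN.lt_or_eq with hlt | rfl
      · exact sub_notMem_Icc hd₀ hd (iterate_notMem_Icc_of_lt_nhit hm₀ hlt) hm
      · exact hnot hm
    exact lt_of_lt_of_le (by exact_mod_cast N.lt_succ_self) hle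

lemma not_forall_nhitE_lt_of_hitSetI_eq_empty (hl : 0 < l) (hS : hitSetI lam l x = ∅)
    (z : ℝ → ℝ) : ¬ ∀ l', 0 < l' → l' < l → nhitE lam l x < nhitE lam l' (z l') := by
  intro h
  simpa [nhitE_eq_top hS] using h (l / 2) (by linarith) (by linarith)

lemma eq_one_add_iff_forall_notMem_Icc (hy : y ∈ Icc 1 (1 + l)) :
    y = 1 + l ↔ ∀ l', 0 < l' → l' < l → y ∉ Icc 1 (1 + l') := by
  constructor
  · rintro rfl l' _ hl' ⟨_, h⟩
    linarith
  · intro h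
    by_contra hne
    have hlt : y < 1 + l := lt_of_le_of_ne hy.2 hne
    exact h ((y - 1 + l) / 2) (by linarith [hy.1]) (by linarith) ⟨hy.1, by linarith⟩

lemma eq_one_iff_forall_sub_notMem_Icc (hy : y ∈ Icc 1 (1 + l)) :
    y = 1 ↔ ∀ l', 0 < l' → l' < l → y - (l - l') ∉ Icc 1 (1 + l') := by
  constructor
  · rintro rfl l' _ hl' ⟨h, _⟩
    linarith
  · intro h
    by_contra hne
    have hgt : 1 < y := lt_of_le_of_ne hy.1 (Ne.symm hne)
    exact h (l - (y - 1) / 2) (by linarith [hy.2]) (by linarith) ⟨by linarith, by linarith [hy.2]⟩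

lemma rmap_one_eq_iff_mem_LamL (hl₀ : 0 < l) (hl : l ≤ lam) :
    rmap lam l 1 = 1 + l ↔ l ∈ LamL lam := by
  simp only [LamL, mem_ofPred_eq, hl₀, hl, true_and]
  rcases (hitSetI lam l 1).eq_empty_or_nonempty with hS | hS
  · rw [rmap_eq_self hS]
    exact iff_of_false (by linarith) (not_forall_nhitE_lt_of_hitSetI_eq_empty hl₀ hS fun _ => 1)
  · have hbase : ∀ l', gl lam l' 1 = gl lam l 1 - 0 := fun l' => by simp [gl_of_le]
    rw [eq_one_add_iff_forall_notMem_Icc (rmap_mem_Icc hS), nhitE_eq_nhit hS]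
    refine forall₃_congr fun l' hl'₀ hl' => ?_
    rw [nhit_lt_nhitE_iff hl'₀ le_rfl (by linarith) (hbase l') hS, sub_zero]

lemma rmap_one_add_eq_iff_mem_LamR (hl₀ : 0 < l) (hl : l ≤ lam) :
    rmap lam l (1 + l) = 1 ↔ l ∈ LamR lam := by
  simp only [LamR, mem_ofPred_eq, hl₀, hl, true_and]
  rcases (hitSetI lam l (1 + l)).eq_empty_or_nonempty with hS | hS
  · rw [rmap_eq_self hS]
    exact iff_of_false (by linarith)
      (not_forall_nhitE_lt_of_hitSetI_eq_empty hl₀ hS fun l' => 1 + l')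
  · have hbase : ∀ l', 0 < l' → gl lam l' (1 + l') = gl lam l (1 + l) - (l - l') :=
      fun l' hl'₀ => by rw [gl_of_one_add_le hl'₀ le_rfl, gl_of_one_add_le hl₀ le_rfl]; ring
    rw [eq_one_iff_forall_sub_notMem_Icc (rmap_mem_Icc hS), nhitE_eq_nhit hS]
    refine forall₃_congr fun l' hl'₀ hl' => ?_
    rw [nhit_lt_nhitE_iff hl'₀ (by linarith) le_rfl (hbase l' hl'₀) hS]

end

theorem bifurcation_points_characterization_general
    (lam : ℝ) (l : ℝ) (hl0 : 0 < l) (hl : l ≤ lam) :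
    (rmap lam l 1 = 1 + l ↔ l ∈ LamL lam) ∧
    (rmap lam l (1 + l) = 1 ↔ l ∈ LamR lam) :=
  ⟨rmap_one_eq_iff_mem_LamL hl0 hl, rmap_one_add_eq_iff_mem_LamR hl0 hl⟩

/-- **Theorem 2.5, first part (characterization of bifurcation points).**
ℓ ∈ (0, λ] is a left bifurcation point (r_ℓ(1) = 1+ℓ) iff ℓ ∈ Λ_L, and a right
bifurcation point (r_ℓ(1+ℓ) = 1) iff ℓ ∈ Λ_R. -/
theorem bifurcation_points_characterization
    (lam : ℝ) (hlam : 0 < lam) (hirr : Irrational lam)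
    (l : ℝ) (hl0 : 0 < l) (hl : l ≤ lam) :
    (rmap lam l 1 = 1 + l ↔ l ∈ LamL lam) ∧
    (rmap lam l (1 + l) = 1 ↔ l ∈ LamR lam) :=
  bifurcation_points_characterization_general lam l hl0 hl

end
end

section
/- Monotonicity of hitting times and discreteness of the bifurcation sets (Theorem 2.5, second part). Let λ > 0 be irrational. The maps ℓ ↦ n_ℓ(1) and ℓ ↦ n_ℓ(1+ℓ) are antitone on (0, λ]: if 0 < l < ℓ ≤ λ then n_ℓ(1) ≤ n_l(1) and n_ℓ(1+ℓ) ≤ n_l(1+l). Moreover, every point of Λ_L and every point of Λ_R is isolated in (0, λ], and any accumulation point of Λ_L or of Λ_R equals 0. -/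
open Real Set
open scoped Classical

noncomputable section

section aux

def rep (c t : ℝ) : ℝ := t + c * (1 + ⌊-t / c⌋)

lemma rep_pos {c : ℝ} (hc : 0 < c) (t : ℝ) : 0 < rep c t := by
  have h := Int.lt_floor_add_one (-t / c)
  have : -t / c * c < (1 + (⌊-t / c⌋ : ℝ)) * c := by
    apply mul_lt_mul_of_pos_right _ hc
    linarith
  rw [div_mul_cancel₀ _ hc.ne'] at this
  unfold rep; nlinarith

lemma rep_le {c : ℝ} (hc : 0 < c) (t : ℝ) : rep c t ≤ c := by
  have h := Int.floor_le (-t / c)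
  have : (⌊-t / c⌋ : ℝ) * c ≤ -t / c * c := mul_le_mul_of_nonneg_right h hc.le
  rw [div_mul_cancel₀ _ hc.ne'] at this
  unfold rep; nlinarith

lemma rep_cong (c t : ℝ) : ∃ k : ℤ, rep c t = t + k * c := by
  exact ⟨1 + ⌊-t / c⌋, by unfold rep; push_cast; ring⟩

lemma rep_unique {c : ℝ} (hc : 0 < c) {t y : ℝ} (h0 : 0 < y) (h1 : y ≤ c)
    (h2 : ∃ k : ℤ, y = t + k * c) : rep c t = y := by
  obtain ⟨k, hk⟩ := h2
  obtain ⟨k0, hk0⟩ := rep_cong c t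
  have hpos := rep_pos hc t
  have hle := rep_le hc t
  have hd : y - rep c t = ((k - k0 : ℤ) : ℝ) * c := by push_cast; rw [hk, hk0]; ring
  have h1' : ((k - k0 : ℤ) : ℝ) * c < 1 * c := by rw [one_mul]; linarith
  have h2' : (-1 : ℝ) * c < ((k - k0 : ℤ) : ℝ) * c := by
    rw [neg_one_mul]; linarith
  have l1 : ((k - k0 : ℤ) : ℝ) < 1 := lt_of_mul_lt_mul_right (by linarith) hc.le
  have l2 : (-1 : ℝ) < ((k - k0 : ℤ) : ℝ) := lt_of_mul_lt_mul_right (by linarith) hc.le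
  have a1 : (k - k0 : ℤ) < 1 := by exact_mod_cast l1
  have a2 : (-1 : ℤ) < (k - k0 : ℤ) := by exact_mod_cast l2
  have : (k - k0 : ℤ) = 0 := by omega
  rw [this] at hd; push_cast at hd; linarith


lemma nonint {lam : ℝ} (hlam : 0 < lam) (hirr : Irrational lam) :
    ∀ n : ℕ, 0 < n → ∀ k : ℤ, (n : ℝ) * lam ≠ k * (1 + lam) := by
  intro n hn k h
  by_cases hk : (n : ℤ) = k
  · rw [← hk] at h; push_cast at h
    have hn' : (0:ℝ) < n := by exact_mod_cast hn
    nlinarith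
  · have hne : ((n : ℝ)) - (k : ℝ) ≠ 0 := by
      intro hh
      apply hk
      have : ((n:ℤ):ℝ) = (k:ℝ) := by push_cast; linarith
      exact_mod_cast this
    have key : lam = (k : ℝ) / ((n : ℝ) - k) := by
      rw [eq_div_iff hne]; nlinarith
    apply hirr
    refine ⟨(k : ℚ) / ((n:ℚ) - (k:ℚ)), ?_⟩
    rw [key]; push_cast; ring

variable {lam0 : ℝ}
end aux

section orbit
variable {lam : ℝ}


lemma hc' (hlam : 0 < lam) : (0:ℝ) < 1 + lam := by linarith

lemma g0_eq_rep (hlam : 0 < lam) {x : ℝ} (hx0 : 0 < x) (hx1 : x ≤ 1 + lam) :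
    g0 lam x = rep (1 + lam) (x + lam) := by
  have hc : (0:ℝ) < 1 + lam := by linarith
  unfold g0
  split_ifs with h
  · exact (rep_unique hc (by linarith) (by linarith) ⟨0, by ring⟩).symm
  · push_neg at h
    exact (rep_unique hc (by linarith) (by linarith) ⟨-1, by ring⟩).symm

lemma g0_iter_eq_rep (hlam : 0 < lam) {x : ℝ} (hx0 : 0 < x) (hx1 : x ≤ 1 + lam) :
    ∀ n : ℕ, (g0 lam)^[n] x = rep (1 + lam) (x + n * lam) := by
  have hc : (0:ℝ) < 1 + lam := by linarith
  intro n
  induction n with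
  | zero => simp; exact (rep_unique hc hx0 hx1 ⟨0, by ring⟩).symm
  | succ n ih =>
      rw [Function.iterate_succ_apply', ih]
      rw [g0_eq_rep hlam (rep_pos hc _) (rep_le hc _)]
      obtain ⟨k, hk⟩ := rep_cong (1 + lam) (x + n * lam)
      apply rep_unique hc (rep_pos hc _) (rep_le hc _)
      obtain ⟨k2, hk2⟩ := rep_cong (1 + lam) (x + (n+1 : ℕ) * lam)
      exact ⟨k2 - k, by rw [hk2, hk]; push_cast; ring⟩

noncomputable def aseq (lam : ℝ) (n : ℕ) : ℝ := rep (1 + lam) (n * lam)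

lemma aseq_pos (hlam : 0 < lam) (n : ℕ) : 0 < aseq lam n := rep_pos (hc' hlam) _

lemma aseq_lt (hlam : 0 < lam) (hirr : Irrational lam) {n : ℕ} (hn : 0 < n) :
    aseq lam n < 1 + lam := by
  rcases lt_or_eq_of_le (rep_le (hc' hlam) ((n:ℝ) * lam)) with h | h
  · exact h
  · exfalso
    obtain ⟨k, hk⟩ := rep_cong (1 + lam) ((n:ℝ) * lam)
    apply nonint hlam hirr n hn (1 - k)
    push_cast
    linear_combination h - hk

-- congruence of aseq
lemma aseq_cong (n : ℕ) : ∃ k : ℤ, aseq lam n = (n:ℝ) * lam + k * (1 + lam) :=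
  rep_cong _ _

-- F2 : hitting condition at x = 1
lemma cond_left (hlam : 0 < lam) (hirr : Irrational lam) {l : ℝ} (hl0 : 0 < l)
    (hl1 : l ≤ lam) {n : ℕ} (hn : 0 < n) :
    ((g0 lam)^[n] 1 ∈ Icc 1 (1 + l)) ↔ aseq lam n ≤ l := by
  have hc : (0:ℝ) < 1 + lam := hc' hlam
  rw [g0_iter_eq_rep hlam one_pos (by linarith) n]
  obtain ⟨k, hk⟩ := aseq_cong (lam := lam) n
  constructor
  · rintro ⟨h1, h2⟩
    obtain ⟨k2, hk2⟩ := rep_cong (1 + lam) (1 + (n:ℝ) * lam)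
    set y := rep (1 + lam) (1 + (n:ℝ) * lam) with hy
    rcases eq_or_lt_of_le h1 with he | hlt
    · exfalso
      apply nonint hlam hirr n hn (-k2)
      push_cast
      linear_combination he.symm - hk2
    · have hrep : aseq lam n = y - 1 := by
        apply rep_unique hc (by linarith) (by linarith)
        exact ⟨k2, by rw [hk2]; ring⟩
      linarith [hrep]
  · intro h
    have hpos := aseq_pos hlam n
    have : rep (1 + lam) (1 + (n:ℝ) * lam) = 1 + aseq lam n := by
      apply rep_unique hc (by linarith) (by linarith)
      exact ⟨k, by rw [hk]; ring⟩
    rw [this]; constructor <;> linarith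

-- F3 : hitting condition at x = 1 + l
lemma cond_right (hlam : 0 < lam) (hirr : Irrational lam) {l : ℝ} (hl0 : 0 < l)
    (hl1 : l ≤ lam) {n : ℕ} (hn : 0 < n) :
    ((g0 lam)^[n] (1 + l) ∈ Icc 1 (1 + l)) ↔ (1 + lam) - aseq lam n ≤ l := by
  have hc : (0:ℝ) < 1 + lam := hc' hlam
  rw [g0_iter_eq_rep hlam (by linarith) (by linarith) n]
  obtain ⟨k, hk⟩ := aseq_cong (lam := lam) n
  have hlt := aseq_lt hlam hirr hn
  constructor
  · rintro ⟨h1, h2⟩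
    obtain ⟨k2, hk2⟩ := rep_cong (1 + lam) (1 + l + (n:ℝ) * lam)
    set y := rep (1 + lam) (1 + l + (n:ℝ) * lam) with hy
    have hrep : aseq lam n = y - 1 - l + (1 + lam) := by
      apply rep_unique hc (by linarith) (by linarith)
      exact ⟨k2 + 1, by rw [hk2]; push_cast; ring⟩
    linarith [hrep]
  · intro h
    have hpos := aseq_pos hlam n
    have : rep (1 + lam) (1 + l + (n:ℝ) * lam) = 1 + l + aseq lam n - (1 + lam) := by
      apply rep_unique hc (by linarith) (by linarith)
      exact ⟨k - 1, by rw [hk]; push_cast; ring⟩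
    rw [this]; constructor <;> linarith

end orbit

section hit
variable {lam l x : ℝ}
def hitSet0 (lam l x : ℝ) : Set ℕ :=
  {n : ℕ | 0 < n ∧ (g0 lam)^[n] x ∈ Set.Icc 1 (1 + l)}

variable {lam l x : ℝ}

lemma gl_eq_g0 (h : x ∉ Ioo 1 (1 + l)) : gl lam l x = g0 lam x := by
  unfold gl g0
  split_ifs with h1 h2
  · rfl
  · exact absurd ⟨lt_of_not_ge h1, h2⟩ h
  · rfl

lemma iter_eq_of_gl (hx : x ∉ Ioo 1 (1 + l)) {n : ℕ}
    (h : ∀ k, 0 < k → k < n → (gl lam l)^[k] x ∉ Icc 1 (1 + l)) :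
    ∀ m, m ≤ n → (gl lam l)^[m] x = (g0 lam)^[m] x := by
  intro m hm
  induction m with
  | zero => simp
  | succ m ih =>
      rw [Function.iterate_succ_apply', Function.iterate_succ_apply',
        ← ih (le_of_lt (Nat.lt_of_succ_le hm))]
      apply gl_eq_g0
      rcases Nat.eq_zero_or_pos m with h0 | h0
      · simpa [h0] using hx
      · intro hmem
        exact h m h0 (Nat.lt_of_succ_le hm) ⟨le_of_lt hmem.1, le_of_lt hmem.2⟩

lemma iter_eq_of_g0 (hx : x ∉ Ioo 1 (1 + l)) {n : ℕ}
    (h : ∀ k, 0 < k → k < n → (g0 lam)^[k] x ∉ Icc 1 (1 + l)) :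
    ∀ m, m ≤ n → (gl lam l)^[m] x = (g0 lam)^[m] x := by
  intro m hm
  induction m with
  | zero => simp
  | succ m ih =>
      have hmn : m < n := Nat.lt_of_succ_le hm
      have heq := ih (le_of_lt hmn)
      rw [Function.iterate_succ_apply', Function.iterate_succ_apply', heq]
      apply gl_eq_g0
      rcases Nat.eq_zero_or_pos m with h0 | h0
      · simpa [h0] using hx
      · intro hmem
        exact h m h0 hmn ⟨le_of_lt hmem.1, le_of_lt hmem.2⟩

lemma hit_min_eq (hx : x ∉ Ioo 1 (1 + l)) :
    nhitE lam l x = sInf ((fun n : ℕ => (n : ℕ∞)) '' hitSet0 lam l x) := by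
  have key : ∀ A B : Set ℕ, ∀ hAB : ∀ n, (∀ k, 0 < k → k < n → k ∉ A) → (n ∈ A ↔ n ∈ B),
      True := fun _ _ _ => trivial
  -- min elements coincide
  have h1 : ∀ n ∈ hitSet0 lam l x, (∀ k ∈ hitSet0 lam l x, n ≤ k) → n ∈ hitSetI lam l x := by
    intro n hn hmin
    have hiter := iter_eq_of_g0 hx (n := n) (fun k hk hkn hmem => by
      have := hmin k ⟨hk, hmem⟩; omega)
    exact ⟨hn.1, by rw [hiter n le_rfl]; exact hn.2⟩
  have h2 : ∀ n ∈ hitSetI lam l x, (∀ k ∈ hitSetI lam l x, n ≤ k) → n ∈ hitSet0 lam l x := by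
    intro n hn hmin
    have hiter := iter_eq_of_gl hx (n := n) (fun k hk hkn hmem => by
      have := hmin k ⟨hk, hmem⟩; omega)
    exact ⟨hn.1, by rw [← hiter n le_rfl]; exact hn.2⟩
  -- also smaller elements absent
  rcases eq_or_ne (hitSetI lam l x) ∅ with he | hne
  · rcases eq_or_ne (hitSet0 lam l x) ∅ with he0 | hne0
    · rw [nhitE, he, he0]
    · exfalso
      obtain ⟨n0, hn0⟩ := Set.nonempty_iff_ne_empty.mpr hne0
      have hmem := Nat.sInf_mem (⟨n0, hn0⟩ : (hitSet0 lam l x).Nonempty)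
      have := h1 _ hmem (fun k hk => Nat.sInf_le hk)
      rw [he] at this; exact this
  · obtain ⟨n0, hn0⟩ := Set.nonempty_iff_ne_empty.mpr hne
    have hmemI := Nat.sInf_mem (⟨n0, hn0⟩ : (hitSetI lam l x).Nonempty)
    have hmem0 := h2 _ hmemI (fun k hk => Nat.sInf_le hk)
    -- sInf hitSet0 = sInf hitSetI
    have hne0 : (hitSet0 lam l x).Nonempty := ⟨_, hmem0⟩
    have hmem0' := Nat.sInf_mem hne0
    have hmemI' := h1 _ hmem0' (fun k hk => Nat.sInf_le hk)
    have heq : sInf (hitSetI lam l x) = sInf (hitSet0 lam l x) :=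
      le_antisymm (Nat.sInf_le hmemI') (Nat.sInf_le hmem0)
    have c1 : nhitE lam l x = ((sInf (hitSetI lam l x) : ℕ) : ℕ∞) := by
      refine le_antisymm (sInf_le ⟨_, hmemI, rfl⟩) (le_sInf ?_)
      rintro y ⟨m, hm, rfl⟩
      show ((sInf (hitSetI lam l x) : ℕ) : ℕ∞) ≤ (m : ℕ∞)
      exact_mod_cast Nat.sInf_le hm
    have c2 : sInf ((fun n : ℕ => (n : ℕ∞)) '' hitSet0 lam l x)
        = ((sInf (hitSet0 lam l x) : ℕ) : ℕ∞) := by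
      refine le_antisymm (sInf_le ⟨_, hmem0', rfl⟩) (le_sInf ?_)
      rintro y ⟨m, hm, rfl⟩
      show ((sInf (hitSet0 lam l x) : ℕ) : ℕ∞) ≤ (m : ℕ∞)
      exact_mod_cast Nat.sInf_le hm
    rw [c1, c2, heq]

end hit

section abst

variable (b : ℕ → ℝ)

def Hs (l : ℝ) : Set ℕ := {n : ℕ | 0 < n ∧ b n ≤ l}
noncomputable def Ne' (l : ℝ) : ℕ∞ := sInf ((fun n : ℕ => (n : ℕ∞)) '' Hs b l)

variable {b}

lemma coe_sInf_of_nonempty {A : Set ℕ} (h : A.Nonempty) :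
    sInf ((fun n : ℕ => (n : ℕ∞)) '' A) = ((sInf A : ℕ) : ℕ∞) := by
  refine le_antisymm (sInf_le ⟨_, Nat.sInf_mem h, rfl⟩) (le_sInf ?_)
  rintro y ⟨m, hm, rfl⟩
  show ((sInf A : ℕ) : ℕ∞) ≤ (m : ℕ∞)
  exact_mod_cast Nat.sInf_le hm

lemma Ne'_anti {l l' : ℝ} (h : l' ≤ l) : Ne' b l ≤ Ne' b l' := by
  apply sInf_le_sInf
  apply Set.image_mono
  intro n hn
  exact ⟨hn.1, le_trans hn.2 h⟩

-- abstract bifurcation set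
def LamA (b : ℕ → ℝ) : Set ℝ :=
  {l : ℝ | 0 < l ∧ ∀ l' : ℝ, 0 < l' → l' < l → Ne' b l < Ne' b l'}

lemma LamA_struct (hpos : ∀ n, 0 < n → 0 < b n) {l : ℝ} (hl : l ∈ LamA b) :
    (Hs b l).Nonempty ∧ b (sInf (Hs b l)) = l ∧
    Ne' b l = ((sInf (Hs b l) : ℕ) : ℕ∞) := by
  obtain ⟨hl0, hmono⟩ := hl
  have hne : (Hs b l).Nonempty := by
    by_contra hc
    have : Ne' b l = ⊤ := by
      rw [Set.not_nonempty_iff_eq_empty] at hc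
      rw [Ne', hc]; simp
    have h2 := hmono (l/2) (by linarith) (by linarith)
    rw [this] at h2
    exact (not_top_lt h2)
  have hmem := Nat.sInf_mem hne
  have hcoe : Ne' b l = ((sInf (Hs b l) : ℕ) : ℕ∞) := coe_sInf_of_nonempty hne
  refine ⟨hne, ?_, hcoe⟩
  rcases lt_or_eq_of_le hmem.2 with hlt | he
  · exfalso
    have hbpos := hpos _ hmem.1
    have h2 := hmono (b (sInf (Hs b l))) hbpos hlt
    have hle : Ne' b (b (sInf (Hs b l))) ≤ ((sInf (Hs b l) : ℕ) : ℕ∞) := by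
      rw [Ne']
      exact sInf_le ⟨_, ⟨hmem.1, le_rfl⟩, rfl⟩
    rw [hcoe] at h2
    exact absurd (lt_of_lt_of_le h2 hle) (lt_irrefl _)
  · exact he

lemma LamA_isolated (hpos : ∀ n, 0 < n → 0 < b n)
    (hdense : ∀ ε : ℝ, 0 < ε → ∃ n, 0 < n ∧ b n < ε)
    {l : ℝ} (hl : l ∈ LamA b) :
    ∃ ε : ℝ, 0 < ε ∧ ∀ l' ∈ LamA b, |l' - l| < ε → l' = l := by
  obtain ⟨hne, hbN, hcoe⟩ := LamA_struct hpos hl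
  set N := sInf (Hs b l) with hN
  have hN1 : 0 < N := (Nat.sInf_mem hne).1
  have hl0 : 0 < l := hl.1
  -- every l' ∈ LamA equals b at its own inf, with records
  have struct : ∀ l' ∈ LamA b, b (sInf (Hs b l')) = l' := fun l' h =>
    (LamA_struct hpos h).2.1
  -- records: below inf, b values exceed l
  have hrec : ∀ j, 0 < j → j < N → l < b j := by
    intro j hj hjN
    by_contra hcon
    push_neg at hcon
    have hjm : j ∈ Hs b l := ⟨hj, hcon⟩
    have := Nat.sInf_le hjm
    omega
  -- Lower side: T nonempty by density
  obtain ⟨n1, hn1pos, hn1⟩ := hdense l hl0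
  have hTne : ∃ m, N < m ∧ b m < l := by
    refine ⟨n1, ?_, hn1⟩
    rcases lt_trichotomy n1 N with h | h | h
    · exact absurd (hrec n1 hn1pos h) (by linarith)
    · exfalso; rw [h, hbN] at hn1; linarith
    · exact h
  set T : Set ℕ := {m | N < m ∧ b m < l} with hT
  have hTne' : T.Nonempty := hTne
  set M := sInf T with hM
  have hMmem : M ∈ T := Nat.sInf_mem hTne'
  -- any l' ∈ LamA with l' < l satisfies l' ≤ b M
  have hlow : ∀ l' ∈ LamA b, l' < l → l' ≤ b M := by
    intro l' hl' hlt
    obtain ⟨hne', hbm, _⟩ := LamA_struct hpos hl'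
    set m := sInf (Hs b l') with hm
    have hm1 : 0 < m := (Nat.sInf_mem hne').1
    have hmN : N < m := by
      rcases lt_trichotomy m N with h | h | h
      · exact absurd (hrec m hm1 h) (by rw [hbm]; linarith)
      · exfalso; rw [h, hbN] at hbm; linarith
      · exact h
    have hmT : m ∈ T := ⟨hmN, by rw [hbm]; exact hlt⟩
    have hMm : M ≤ m := Nat.sInf_le hmT
    rcases eq_or_lt_of_le hMm with he | hMlt
    · rw [← hbm, ← he]
    · -- M < m, M is below inf of Hs b l', so b M > l'
      have hrec' : l' < b M := by
        by_contra hcon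
        push_neg at hcon
        have hM0 : 0 < M := by have := hMmem.1; omega
        have hMH : M ∈ Hs b l' := ⟨hM0, hcon⟩
        have := Nat.sInf_le hMH
        omega
      exact le_of_lt hrec'
  -- Upper side: finite candidates
  set F : Finset ℝ := ((Finset.Ico 1 N).image b).filter (fun y => l < y) with hF
  have hup : ∀ l' ∈ LamA b, l < l' → l' ∈ F := by
    intro l' hl' hlt
    obtain ⟨hne', hbm, hcoe'⟩ := LamA_struct hpos hl'
    set m := sInf (Hs b l') with hm
    have hm1 : 0 < m := (Nat.sInf_mem hne').1
    -- Ne' l' < Ne' l since l < l' and l' ∈ LamA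
    have h2 := hl'.2 l hl0 hlt
    rw [hcoe, hcoe'] at h2
    have hmN : m < N := by exact_mod_cast h2
    refine Finset.mem_filter.mpr ⟨Finset.mem_image.mpr ⟨m, ?_, hbm⟩, by rw [← hbm] at hlt ⊢; exact hlt⟩
    rw [Finset.mem_Ico]; omega
  -- choose ε
  by_cases hFne : F.Nonempty
  · refine ⟨min (l - b M) (F.min' hFne - l), ?_, ?_⟩
    · apply lt_min
      · linarith [hMmem.2]
      · have := F.min'_mem hFne
        have := (Finset.mem_filter.mp this).2
        linarith
    · intro l' hl' habs
      rcases lt_trichotomy l' l with h | h | h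
      · exfalso
        have h1 := hlow l' hl' h
        have h2 : |l' - l| = l - l' := by rw [abs_of_nonpos (by linarith)]; ring
        rw [h2] at habs
        have := lt_min_iff.mp habs
        linarith [this.1]
      · exact h
      · exfalso
        have h1 := hup l' hl' h
        have h3 := F.min'_le _ h1
        have h2 : |l' - l| = l' - l := by rw [abs_of_nonneg (by linarith)]
        rw [h2] at habs
        have := lt_min_iff.mp habs
        linarith [this.2]
  · refine ⟨l - b M, by linarith [hMmem.2], ?_⟩
    intro l' hl' habs
    rcases lt_trichotomy l' l with h | h | h
    · exfalso
      have h1 := hlow l' hl' h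
      have h2 : |l' - l| = l - l' := by rw [abs_of_nonpos (by linarith)]; ring
      rw [h2] at habs
      linarith
    · exact h
    · exact absurd (hup l' hl' h) (by simp [Finset.not_nonempty_iff_eq_empty.mp hFne])

lemma LamA_accum (hpos : ∀ n, 0 < n → 0 < b n)
    (hdense : ∀ ε : ℝ, 0 < ε → ∃ n, 0 < n ∧ b n < ε)
    {x : ℝ} (hx : ∀ ε : ℝ, 0 < ε → ∃ l ∈ LamA b, l ≠ x ∧ |l - x| < ε) :
    x = 0 := by
  by_contra hx0
  rcases lt_trichotomy x 0 with hneg | hzero | hposx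
  · obtain ⟨l, hl, _, habs⟩ := hx (-x) (by linarith)
    have : l - x ≤ |l - x| := le_abs_self _
    linarith [hl.1]
  · exact hx0 hzero
  · obtain ⟨n0, hn0pos, hn0⟩ := hdense (x/2) (by linarith)
    -- all LamA points > x/2 lie in image of Icc 1 n0
    have hfin : ∀ l ∈ LamA b, x/2 < l → l ∈ (Finset.Icc 1 n0).image b := by
      intro l hl hgt
      obtain ⟨hne', hbm, _⟩ := LamA_struct hpos hl
      set m := sInf (Hs b l) with hm
      have hm1 : 0 < m := (Nat.sInf_mem hne').1
      have hmn0 : m ≤ n0 := Nat.sInf_le ⟨hn0pos, by linarith⟩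
      exact Finset.mem_image.mpr ⟨m, Finset.mem_Icc.mpr ⟨hm1, hmn0⟩, hbm⟩
    set S : Finset ℝ := ((Finset.Icc 1 n0).image b).filter (fun y => y ≠ x) with hS
    by_cases hSne : S.Nonempty
    · set δ := S.inf' hSne (fun y => |y - x|) with hδ
      have hδpos : 0 < δ := by
        rw [hδ]
        refine (Finset.lt_inf'_iff hSne).mpr ?_
        intro y hy
        have := (Finset.mem_filter.mp hy).2
        exact abs_pos.mpr (sub_ne_zero.mpr this)
      obtain ⟨l, hl, hlne, habs⟩ := hx (min δ (x/2)) (lt_min hδpos (by linarith))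
      have hgt : x/2 < l := by
        have h1 : |l - x| < x/2 := lt_of_lt_of_le habs (min_le_right _ _)
        have := abs_lt.mp h1
        linarith [this.1]
      have hmem := hfin l hl hgt
      have hmemS : l ∈ S := Finset.mem_filter.mpr ⟨hmem, hlne⟩
      have := Finset.inf'_le (fun y => |y - x|) hmemS
      have h2 : |l - x| < δ := lt_of_lt_of_le habs (min_le_left _ _)
      linarith
    · obtain ⟨l, hl, hlne, habs⟩ := hx (x/2) (by linarith)
      have hgt : x/2 < l := by
        have := abs_lt.mp habs
        linarith [this.1]
      have hmem := hfin l hl hgt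
      have hmemS : l ∈ S := Finset.mem_filter.mpr ⟨hmem, hlne⟩
      exact absurd hmemS (by simp [Finset.not_nonempty_iff_eq_empty.mp hSne])
end abst

section dens
variable {lam : ℝ}
-- pigeonhole step
lemma aseq_small_or_large (hlam : 0 < lam) (hirr : Irrational lam) {ε : ℝ}
    (hε : 0 < ε) (hεc : ε ≤ 1 + lam) :
    ∃ n, 0 < n ∧ (aseq lam n < ε ∨ aseq lam n > (1 + lam) - ε) := by
  have hc : (0:ℝ) < 1 + lam := by linarith
  set B : ℤ := ⌊(1 + lam) / ε⌋ with hB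
  have hB0 : 0 ≤ B := Int.floor_nonneg.mpr (by positivity)
  set K : ℕ := B.toNat + 2 with hK
  have hmaps : ∀ i ∈ Finset.Icc 1 K, ⌊aseq lam i / ε⌋ ∈ Finset.Icc (0:ℤ) B := by
    intro i _
    rw [Finset.mem_Icc]
    refine ⟨Int.floor_nonneg.mpr (div_nonneg (aseq_pos hlam i).le hε.le), ?_⟩
    apply Int.floor_le_floor
    gcongr
    exact rep_le hc _
  have hcard : (Finset.Icc (0:ℤ) B).card < (Finset.Icc 1 K).card := by
    rw [Int.card_Icc, Nat.card_Icc]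
    omega
  obtain ⟨i, hi, j, hj, hij, hfl⟩ :=
    Finset.exists_ne_map_eq_of_card_lt_of_maps_to hcard hmaps
  -- wlog i < j
  have main : ∀ i j : ℕ, i ∈ Finset.Icc 1 K → j ∈ Finset.Icc 1 K → i < j →
      ⌊aseq lam i / ε⌋ = ⌊aseq lam j / ε⌋ →
      ∃ n, 0 < n ∧ (aseq lam n < ε ∨ aseq lam n > (1 + lam) - ε) := by
    clear hfl hij hi hj i j
    intro i j hi hj hij hfl
    have hd1 : aseq lam j - aseq lam i < ε := by
      have h1 : aseq lam j / ε < ⌊aseq lam i / ε⌋ + 1 := by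
        rw [hfl]; exact Int.lt_floor_add_one _
      have h2 : (⌊aseq lam i / ε⌋ : ℝ) ≤ aseq lam i / ε := Int.floor_le _
      have h3 : aseq lam j < (⌊aseq lam i / ε⌋ + 1) * ε := by
        rw [← div_lt_iff₀ hε] at *; linarith
      have h4 : (⌊aseq lam i / ε⌋ : ℝ) * ε ≤ aseq lam i := by
        rw [← le_div_iff₀ hε]; exact h2
      nlinarith
    have hd2 : aseq lam i - aseq lam j < ε := by
      have h1 : aseq lam i / ε < ⌊aseq lam j / ε⌋ + 1 := by
        rw [← hfl]; exact Int.lt_floor_add_one _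
      have h2 : (⌊aseq lam j / ε⌋ : ℝ) ≤ aseq lam j / ε := Int.floor_le _
      have h3 : aseq lam i < (⌊aseq lam j / ε⌋ + 1) * ε := by
        rw [← div_lt_iff₀ hε] at *; linarith
      have h4 : (⌊aseq lam j / ε⌋ : ℝ) * ε ≤ aseq lam j := by
        rw [← le_div_iff₀ hε]; exact h2
      nlinarith
    obtain ⟨ki, hki⟩ := aseq_cong (lam := lam) i
    obtain ⟨kj, hkj⟩ := aseq_cong (lam := lam) j
    have hsub : ((j - i : ℕ) : ℝ) = (j : ℝ) - i := by
      push_cast [Nat.cast_sub hij.le]; ring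
    have hδcong : aseq lam j - aseq lam i
        = ((j - i : ℕ) : ℝ) * lam + ((kj - ki : ℤ) : ℝ) * (1 + lam) := by
      rw [hkj, hki, hsub]; push_cast; ring
    have hδne : aseq lam j - aseq lam i ≠ 0 := by
      intro h0
      apply nonint hlam hirr (j - i) (by omega) (ki - kj)
      push_cast
      rw [hδcong] at h0
      push_cast at h0
      linarith
    rcases lt_or_gt_of_ne hδne with hneg | hpos
    · -- δ < 0 : large
      refine ⟨j - i, by omega, Or.inr ?_⟩
      have : aseq lam (j - i) = aseq lam j - aseq lam i + (1 + lam) := by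
        apply rep_unique hc (by linarith) (by linarith)
        exact ⟨kj - ki + 1, by rw [hδcong]; push_cast; ring⟩
      rw [this]; linarith
    · -- δ > 0 : small
      refine ⟨j - i, by omega, Or.inl ?_⟩
      have : aseq lam (j - i) = aseq lam j - aseq lam i := by
        apply rep_unique hc hpos (by linarith)
        exact ⟨kj - ki, by rw [hδcong]⟩
      rw [this]; linarith
  rcases lt_or_gt_of_ne hij with h | h
  · exact main i j hi hj h hfl
  · exact main j i hj hi h hfl.symm

-- small → large conversion
lemma aseq_large_of_small (hlam : 0 < lam) (hirr : Irrational lam) {ε : ℝ}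
    (hε : 0 < ε) (hεc : ε ≤ 1 + lam) {n : ℕ} (hn : 0 < n) (hsm : aseq lam n < ε) :
    ∃ m, 0 < m ∧ aseq lam m > (1 + lam) - ε := by
  have hc : (0:ℝ) < 1 + lam := by linarith
  set s := aseq lam n with hs
  have hs0 : 0 < s := aseq_pos hlam n
  set k : ℤ := ⌊(1 + lam) / s⌋ with hk
  have hk1 : 1 ≤ k := by
    rw [hk]
    apply Int.le_floor.mpr
    push_cast
    rw [le_div_iff₀ hs0]
    linarith [rep_le hc ((n:ℝ) * lam)]
  have hks : (k : ℝ) * s ≤ 1 + lam := by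
    have := Int.floor_le ((1 + lam) / s)
    calc (k : ℝ) * s ≤ ((1 + lam) / s) * s := by
          apply mul_le_mul_of_nonneg_right _ hs0.le
          exact this
      _ = 1 + lam := by field_simp
  have hks2 : 1 + lam < ((k : ℝ) + 1) * s := by
    have := Int.lt_floor_add_one ((1 + lam) / s)
    have h2 : (1 + lam) / s < (k : ℝ) + 1 := by push_cast at this ⊢; linarith
    rw [div_lt_iff₀ hs0] at h2
    linarith
  obtain ⟨k0, hk0⟩ := aseq_cong (lam := lam) n
  refine ⟨k.toNat * n, Nat.mul_pos (by omega) hn, ?_⟩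
  have h1' : ((k.toNat : ℕ) : ℝ) = (k : ℝ) := by
    exact_mod_cast congrArg (fun z : ℤ => (z : ℝ)) (Int.toNat_of_nonneg (by omega : (0:ℤ) ≤ k))
  have hcast : ((k.toNat * n : ℕ) : ℝ) = (k : ℝ) * n := by push_cast [h1']; ring
  have : aseq lam (k.toNat * n) = (k : ℝ) * s := by
    apply rep_unique hc (by positivity) hks
    refine ⟨k * k0, ?_⟩
    rw [hcast, hs, hk0]
    push_cast
    ring
  rw [this]; nlinarith

-- large → small conversion
lemma aseq_small_of_large (hlam : 0 < lam) (hirr : Irrational lam) {ε : ℝ}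
    (hε : 0 < ε) (hεc : ε ≤ 1 + lam) {n : ℕ} (hn : 0 < n)
    (hlg : aseq lam n > (1 + lam) - ε) :
    ∃ m, 0 < m ∧ aseq lam m < ε := by
  have hc : (0:ℝ) < 1 + lam := by linarith
  set t := 1 + lam - aseq lam n with ht
  have ht0 : 0 < t := by rw [ht]; linarith [aseq_lt hlam hirr hn]
  have htε : t < ε := by rw [ht]; linarith
  set k : ℤ := ⌊(1 + lam) / t⌋ with hk
  have hk1 : 1 ≤ k := by
    rw [hk]
    apply Int.le_floor.mpr
    push_cast
    rw [le_div_iff₀ ht0]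
    linarith [aseq_pos hlam n]
  obtain ⟨k0, hk0⟩ := aseq_cong (lam := lam) n
  have hkt : (k : ℝ) * t ≤ 1 + lam := by
    have := Int.floor_le ((1 + lam) / t)
    calc (k : ℝ) * t ≤ ((1 + lam) / t) * t :=
          mul_le_mul_of_nonneg_right this ht0.le
      _ = 1 + lam := by field_simp
  have hktne : (k : ℝ) * t ≠ 1 + lam := by
    intro heq
    apply nonint hlam hirr (k.toNat * n) (Nat.mul_pos (by omega) hn) (k - k * k0 - 1)
    have h1 : ((k.toNat : ℕ) : ℝ) = (k : ℝ) := by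
      exact_mod_cast congrArg (fun z : ℤ => (z : ℝ)) (Int.toNat_of_nonneg (by omega : (0:ℤ) ≤ k))
    have hcast : ((k.toNat * n : ℕ) : ℝ) = (k : ℝ) * n := by push_cast [h1]; ring
    have heq' : (k:ℝ) * (1 + lam - aseq lam n) = 1 + lam := by rw [← ht]; exact heq
    rw [hcast]
    push_cast
    linear_combination (-(k:ℝ)) * hk0 - heq'
  have hkt' : (k : ℝ) * t < 1 + lam := lt_of_le_of_ne hkt hktne
  have hkt2 : 1 + lam < ((k : ℝ) + 1) * t := by
    have := Int.lt_floor_add_one ((1 + lam) / t)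
    have h2 : (1 + lam) / t < (k : ℝ) + 1 := by push_cast at this ⊢; linarith
    rw [div_lt_iff₀ ht0] at h2
    linarith
  refine ⟨k.toNat * n, Nat.mul_pos (by omega) hn, ?_⟩
  have h1' : ((k.toNat : ℕ) : ℝ) = (k : ℝ) := by
    exact_mod_cast congrArg (fun z : ℤ => (z : ℝ)) (Int.toNat_of_nonneg (by omega : (0:ℤ) ≤ k))
  have hcast : ((k.toNat * n : ℕ) : ℝ) = (k : ℝ) * n := by push_cast [h1']; ring
  have : aseq lam (k.toNat * n) = (1 + lam) - (k : ℝ) * t := by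
    apply rep_unique hc (by linarith) (by nlinarith)
    refine ⟨k * k0 - k + 1, ?_⟩
    rw [hcast, ht, hk0]
    push_cast
    ring
  rw [this]; nlinarith

-- final density lemmas
lemma aseq_dense_small (hlam : 0 < lam) (hirr : Irrational lam) :
    ∀ ε : ℝ, 0 < ε → ∃ n, 0 < n ∧ aseq lam n < ε := by
  intro ε hε
  set ε' := min ε (1 + lam) with hε'
  have hε'0 : 0 < ε' := lt_min hε (by linarith)
  have hε'c : ε' ≤ 1 + lam := min_le_right _ _
  obtain ⟨n, hn, hcase⟩ := aseq_small_or_large hlam hirr hε'0 hε'c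
  rcases hcase with h | h
  · exact ⟨n, hn, lt_of_lt_of_le h (min_le_left _ _)⟩
  · obtain ⟨m, hm, hsm⟩ := aseq_small_of_large hlam hirr hε'0 hε'c hn h
    exact ⟨m, hm, lt_of_lt_of_le hsm (min_le_left _ _)⟩

lemma aseq_dense_large (hlam : 0 < lam) (hirr : Irrational lam) :
    ∀ ε : ℝ, 0 < ε → ∃ n, 0 < n ∧ (1 + lam) - aseq lam n < ε := by
  intro ε hε
  set ε' := min ε (1 + lam) with hε'
  have hε'0 : 0 < ε' := lt_min hε (by linarith)
  have hε'c : ε' ≤ 1 + lam := min_le_right _ _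
  obtain ⟨n, hn, hcase⟩ := aseq_small_or_large hlam hirr hε'0 hε'c
  rcases hcase with h | h
  · obtain ⟨m, hm, hlg⟩ := aseq_large_of_small hlam hirr hε'0 hε'c hn h
    refine ⟨m, hm, ?_⟩
    have := min_le_left ε (1 + lam)
    linarith [hlg]
  · refine ⟨n, hn, ?_⟩
    have := min_le_left ε (1 + lam)
    linarith [h]

end dens


/-- **Theorem 2.5, second part (monotonicity of hitting times and discreteness
of the bifurcation sets).** The maps ℓ ↦ n_ℓ(1) and ℓ ↦ n_ℓ(1+ℓ) are antitone on
(0, λ]; every point of Λ_L and of Λ_R is isolated, and any accumulation point of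
Λ_L or Λ_R equals 0. -/
theorem hitting_times_antitone_and_bifurcation_sets_discrete
    (lam : ℝ) (hlam : 0 < lam) (hirr : Irrational lam) :
    (∀ l l' : ℝ, 0 < l' → l' < l → l ≤ lam → nhitE lam l 1 ≤ nhitE lam l' 1) ∧
    (∀ l l' : ℝ, 0 < l' → l' < l → l ≤ lam →
      nhitE lam l (1 + l) ≤ nhitE lam l' (1 + l')) ∧
    (∀ l ∈ LamL lam, ∃ ε : ℝ, 0 < ε ∧ ∀ l' ∈ LamL lam, |l' - l| < ε → l' = l) ∧
    (∀ l ∈ LamR lam, ∃ ε : ℝ, 0 < ε ∧ ∀ l' ∈ LamR lam, |l' - l| < ε → l' = l) ∧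
    (∀ x : ℝ, (∀ ε : ℝ, 0 < ε → ∃ l ∈ LamL lam, l ≠ x ∧ |l - x| < ε) → x = 0) ∧
    (∀ x : ℝ, (∀ ε : ℝ, 0 < ε → ∃ l ∈ LamR lam, l ≠ x ∧ |l - x| < ε) → x = 0) := by
  have hc : (0:ℝ) < 1 + lam := by linarith
  have hposL : ∀ n : ℕ, 0 < n → 0 < aseq lam n := fun n _ => aseq_pos hlam n
  have hposR : ∀ n : ℕ, 0 < n → 0 < (1 + lam) - aseq lam n :=
    fun n hn => by linarith [aseq_lt hlam hirr hn]
  have hdL := aseq_dense_small hlam hirr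
  have hdR := aseq_dense_large hlam hirr
  have redL : ∀ l : ℝ, 0 < l → l ≤ lam →
      nhitE lam l 1 = Ne' (fun n => aseq lam n) l := by
    intro l h0 h1
    rw [hit_min_eq (x := (1:ℝ)) (fun h => lt_irrefl _ h.1)]
    have hset : hitSet0 lam l 1 = Hs (fun n => aseq lam n) l := by
      ext n
      constructor
      · rintro ⟨hn, hm⟩; exact ⟨hn, (cond_left hlam hirr h0 h1 hn).mp hm⟩
      · rintro ⟨hn, hm⟩; exact ⟨hn, (cond_left hlam hirr h0 h1 hn).mpr hm⟩
    rw [Ne', hset]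
  have redR : ∀ l : ℝ, 0 < l → l ≤ lam →
      nhitE lam l (1 + l) = Ne' (fun n => (1 + lam) - aseq lam n) l := by
    intro l h0 h1
    rw [hit_min_eq (x := (1 + l : ℝ)) (fun h => lt_irrefl _ h.2)]
    have hset : hitSet0 lam l (1 + l) = Hs (fun n => (1 + lam) - aseq lam n) l := by
      ext n
      constructor
      · rintro ⟨hn, hm⟩; exact ⟨hn, (cond_right hlam hirr h0 h1 hn).mp hm⟩
      · rintro ⟨hn, hm⟩; exact ⟨hn, (cond_right hlam hirr h0 h1 hn).mpr hm⟩
    rw [Ne', hset]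
  have incL : ∀ l ∈ LamL lam, l ∈ LamA (fun n => aseq lam n) := by
    rintro l ⟨h0, h1, h2⟩
    refine ⟨h0, fun l' h0' hlt => ?_⟩
    rw [← redL l h0 h1, ← redL l' h0' (le_trans hlt.le h1)]
    exact h2 l' h0' hlt
  have incR : ∀ l ∈ LamR lam, l ∈ LamA (fun n => (1 + lam) - aseq lam n) := by
    rintro l ⟨h0, h1, h2⟩
    refine ⟨h0, fun l' h0' hlt => ?_⟩
    rw [← redR l h0 h1, ← redR l' h0' (le_trans hlt.le h1)]
    exact h2 l' h0' hlt
  refine ⟨?_, ?_, ?_, ?_, ?_, ?_⟩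
  · intro l l' h0' hlt hle
    rw [redL l (lt_trans h0' hlt) hle, redL l' h0' (le_trans hlt.le hle)]
    exact Ne'_anti hlt.le
  · intro l l' h0' hlt hle
    rw [redR l (lt_trans h0' hlt) hle, redR l' h0' (le_trans hlt.le hle)]
    exact Ne'_anti hlt.le
  · intro l hl
    obtain ⟨ε, hε, hall⟩ := LamA_isolated hposL hdL (incL l hl)
    exact ⟨ε, hε, fun l' hl' h => hall l' (incL l' hl') h⟩
  · intro l hl
    obtain ⟨ε, hε, hall⟩ := LamA_isolated hposR hdR (incR l hl)
    exact ⟨ε, hε, fun l' hl' h => hall l' (incR l' hl') h⟩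
  · intro x hx
    apply LamA_accum hposL hdL (x := x)
    intro ε hε
    obtain ⟨l, hl, h1, h2⟩ := hx ε hε
    exact ⟨l, incL l hl, h1, h2⟩
  · intro x hx
    apply LamA_accum hposR hdR (x := x)
    intro ε hε
    obtain ⟨l, hl, h1, h2⟩ := hx ε hε
    exact ⟨l, incR l hl, h1, h2⟩

end
end
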